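/- arXiv:2303.04033 — 9 statements merged into one kernel-verified Lean document; each statement's English description precedes it below -/
import Mathlib

section
/- Let f ∈ ℤ[X] be a polynomial that factors as f = g·h with g, h ∈ ℤ[X], and let a be an integer with f(a) ≠ 0. Then gcd(g(a), f(a)/g(a)) divides gcd(f(a), f'(a)); i.e., g(a) is an admissible divisor of f(a). -/
open Polynomial Real

noncomputable section

/-- `d` is an admissible divisor of `f(a)`. -/
def AdmDiv (f : Polynomial ℤ) (a d : ℤ) : Prop :=
  d ∣ f.eval a ∧
    Int.gcd d (f.eval a / d) ∣ Int.gcd (f.eval a) (f.derivative.eval a)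

/-- `d` is a unitary divisor of `N`. -/
def UnitDiv (N d : ℤ) : Prop := d ∣ N ∧ Int.gcd d (N / d) = 1

/-- `f` is a product of at most `k` nonconstant irreducible factors over `ℚ`
(counting multiplicities): it cannot be written as a product of `k + 1`
nonconstant polynomials over `ℚ`. -/
def FactorsAtMost (f : Polynomial ℤ) (k : ℕ) : Prop :=
  ∀ g : Fin (k + 1) → Polynomial ℚ, (∀ i, 0 < (g i).natDegree) →
    f.map (Int.castRingHom ℚ) ≠ ∏ i, g i

/-- `q` is the quantity `q_k` of the paper: the greatest ratio `d₂/d₁` of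
admissible divisors of `f(b)` and `f(a)` not exceeding `(|f(b)|/|f(a)|)^(1/(k+1))`. -/
def IsQk (f : Polynomial ℤ) (a b : ℤ) (k : ℕ) (q : ℝ) : Prop :=
  IsGreatest {x : ℝ | ∃ d₁ d₂ : ℤ, AdmDiv f a d₁ ∧ AdmDiv f b d₂ ∧
    x = (d₂ : ℝ) / (d₁ : ℝ) ∧
    x ≤ (|((f.eval b : ℤ) : ℝ)| / |((f.eval a : ℤ) : ℝ)|) ^ ((k + 1 : ℝ))⁻¹} q

/-- `q` is the quantity `q^u_k` of the paper, defined via unitary divisors. -/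
def IsQuk (f : Polynomial ℤ) (a b : ℤ) (k : ℕ) (q : ℝ) : Prop :=
  IsGreatest {x : ℝ | ∃ d₁ d₂ : ℤ, UnitDiv (f.eval a) d₁ ∧ UnitDiv (f.eval b) d₂ ∧
    x = (d₂ : ℝ) / (d₁ : ℝ) ∧
    x ≤ (|((f.eval b : ℤ) : ℝ)| / |((f.eval a : ℤ) : ℝ)|) ^ ((k + 1 : ℝ))⁻¹} q

theorem stmt0 (f g h : Polynomial ℤ) (a : ℤ) (hf : f = g * h)
    (ha : f.eval a ≠ 0) :
    Int.gcd (g.eval a) (f.eval a / g.eval a) ∣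
      Int.gcd (f.eval a) (f.derivative.eval a) := by
  subst hf
  have hG : (g * h).eval a = g.eval a * h.eval a := by simp
  have hg0 : g.eval a ≠ 0 := left_ne_zero_of_mul (hG ▸ ha)
  have hdiv : (g * h).eval a / g.eval a = h.eval a := by
    rw [hG, mul_comm, Int.mul_ediv_cancel _ hg0]
  rw [hdiv, ← Int.natCast_dvd_natCast]
  apply Int.dvd_coe_gcd
  · rw [hG]
    exact dvd_mul_of_dvd_left (Int.gcd_dvd_left _ _) _
  · rw [derivative_mul, eval_add, eval_mul, eval_mul]
    exact dvd_add (Dvd.dvd.mul_left (Int.gcd_dvd_right _ _) _)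
      (Dvd.dvd.mul_right (Int.gcd_dvd_left _ _) _)
end
end

section
/- Let f ∈ ℤ[X] with 0 < |f(a)| < |f(b)| for integers a, b, let k ≥ 1, and let q_k = max{ d₂/d₁ : d₁ an admissible divisor of f(a), d₂ an admissible divisor of f(b), d₂/d₁ ≤ (|f(b)|/|f(a)|)^(1/(k+1)) }. If q_k > 1 and every complex root θ of f satisfies |b − θ| > q_k·|a − θ|, then f is a product of at most k irreducible factors over ℚ (counting multiplicities of nonconstant irreducible factors). -/
open Polynomial Real

noncomputable section

/-!
Suppose `f = H₀ ⋯ H_k` with nonconstant factors; by Gauss's lemma they may be taken in `ℤ[X]`.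
Each `H_i(a)`, `H_i(b)` is an admissible divisor, and from `|H_i(x)| = |lc H_i| ∏ |x - θ|` over
the roots of `H_i` the Apollonius condition gives `|H_i(b)| / |H_i(a)| > q ^ deg H_i ≥ q`. The
smallest of these `k + 1` ratios is at most their geometric mean `(|f(b)| / |f(a)|) ^ (1/(k+1))`,
so it is one of the ratios competing in the definition of `q`, contradicting the maximality of `q`.
-/

section Gauss

variable {R K : Type*} [CommRing R] [IsDomain R] [NormalizedGCDMonoid R] [Field K] [Algebra R K]
  [IsFractionRing R K]

theorem Polynomial.exists_isPrimitive_map_eq_C_mul {g : K[X]} (hg : g ≠ 0) :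
    ∃ G : R[X], G.IsPrimitive ∧ ∃ c : K, c ≠ 0 ∧ G.map (algebraMap R K) = C c * g := by
  set N := IsLocalization.integerNormalization (nonZeroDivisors R) g
  obtain ⟨b, hb, hNg⟩ := IsLocalization.integerNormalization_spec (nonZeroDivisors R) g
  have hinj := IsFractionRing.injective R K
  have hN : N ≠ 0 := (IsFractionRing.integerNormalization_eq_zero_iff).not.mpr hg
  have hcont : algebraMap R K N.content ≠ 0 :=
    (map_ne_zero_iff _ hinj).mpr (content_eq_zero_iff.not.mpr hN)
  have hb0 : algebraMap R K b ≠ 0 := (map_ne_zero_iff _ hinj).mpr (nonZeroDivisors.ne_zero hb)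
  refine ⟨N.primPart, N.isPrimitive_primPart, (algebraMap R K N.content)⁻¹ * algebraMap R K b,
    mul_ne_zero (inv_ne_zero hcont) hb0, ?_⟩
  have hmap := congr_arg (map (algebraMap R K)) N.eq_C_content_mul_primPart
  rw [hNg, Polynomial.map_mul, map_C, Algebra.smul_def, algebraMap_apply] at hmap
  rw [C_mul, mul_assoc, hmap, ← mul_assoc, ← C_mul, inv_mul_cancel₀ hcont, C_1, one_mul]

-- The scalar `c` collects the denominators of the factors already lifted in the induction.
theorem Polynomial.exists_prod_eq_of_map_eq_C_mul_prod {m : ℕ} (f : R[X])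
    (g : Fin (m + 1) → K[X]) (hg : ∀ i, g i ≠ 0) {c : K} (hc : c ≠ 0)
    (hfg : f.map (algebraMap R K) = C c * ∏ i, g i) :
    ∃ F : Fin (m + 1) → R[X], f = ∏ i, F i ∧ ∀ i, (F i).natDegree = (g i).natDegree := by
  have hinj := IsFractionRing.injective R K
  induction m generalizing f c with
  | zero =>
    refine ⟨fun _ => f, by simp, fun i => ?_⟩
    rw [Fin.fin_one_eq_zero i, ← natDegree_map_eq_of_injective hinj, hfg, Fin.prod_univ_one,
      natDegree_C_mul hc]
  | succ m ih =>
    obtain ⟨G, hGprim, c₀, hc₀, hG⟩ := exists_isPrimitive_map_eq_C_mul (R := R) (hg 0)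
    have hsplit : f.map (algebraMap R K) =
        G.map (algebraMap R K) * (C (c / c₀) * ∏ i : Fin (m + 1), g i.succ) := by
      have hunit : C c₀ * C c₀⁻¹ = (1 : K[X]) := by rw [← C_mul, mul_inv_cancel₀ hc₀, C_1]
      rw [hfg, hG, Fin.prod_univ_succ, div_eq_mul_inv, C_mul]
      linear_combination (-(C c * g 0 * ∏ i : Fin (m + 1), g i.succ)) * hunit
    -- Gauss's lemma: `G` is primitive, so the cofactor of `G.map` in `f.map` comes from `R[X]`.
    obtain ⟨f', hf'⟩ := (mem_lifts _).mp
      (hGprim.map_mul_mem_lifts_iff.mp ⟨f, hsplit⟩)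
    obtain ⟨F, hF, hdeg⟩ := ih f' (fun i => g i.succ) (fun i => hg _)
      (div_ne_zero hc hc₀) hf'
    refine ⟨Fin.cons G F, ?_, Fin.cases ?_ hdeg⟩
    · rw [Fin.prod_univ_succ, Fin.cons_zero]
      simp only [Fin.cons_succ, ← hF]
      apply map_injective _ hinj
      rw [Polynomial.map_mul, hf', hsplit]
    · rw [Fin.cons_zero, ← natDegree_map_eq_of_injective hinj, hG, natDegree_C_mul hc₀]

end Gauss

theorem Polynomial.pow_natDegree_mul_norm_eval_lt {K : Type*} [NormedField K] [IsAlgClosed K]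
    {P : K[X]} {a b : K} {q : ℝ} (hq : 0 < q) (hdeg : 0 < P.natDegree) (ha : P.eval a ≠ 0)
    (hroots : ∀ θ, P.IsRoot θ → q * ‖a - θ‖ < ‖b - θ‖) :
    q ^ P.natDegree * ‖P.eval a‖ < ‖P.eval b‖ := by
  have hsplits := IsAlgClosed.splits P
  have hnorm : ∀ x, ‖P.eval x‖ = ‖P.leadingCoeff‖ * (P.roots.map fun θ => ‖x - θ‖).prod := by
    intro x
    rw [hsplits.eval_eq_prod_roots, norm_mul, ← Function.comp_def norm, ← Multiset.map_map]
    exact congr_arg _ (map_multiset_prod (normHom : K →*₀ ℝ) _)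
  have hP : P ≠ 0 := fun h => ha (by simp [h])
  have hroots_ne : P.roots ≠ 0 := by
    rw [← Multiset.card_pos, ← hsplits.natDegree_eq_card_roots]
    exact hdeg
  have hprod : (P.roots.map fun θ => q * ‖a - θ‖).prod
      < (P.roots.map fun θ => ‖b - θ‖).prod := by
    refine Multiset.prod_map_lt_prod_map hroots_ne _ _ (fun θ hθ => ?_)
      (fun θ hθ => hroots θ (isRoot_of_mem_roots hθ))
    have hθa : a ≠ θ := fun h => ha (h ▸ isRoot_of_mem_roots hθ)
    exact mul_pos hq (norm_pos_iff.mpr (sub_ne_zero.mpr hθa))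
  rw [Multiset.prod_map_mul, Multiset.map_const', Multiset.prod_replicate,
    ← hsplits.natDegree_eq_card_roots] at hprod
  rw [hnorm, hnorm, mul_left_comm]
  exact mul_lt_mul_of_pos_left hprod (norm_pos_iff.mpr (leadingCoeff_ne_zero.mpr hP))

theorem AdmDiv.abs {f : ℤ[X]} {a d : ℤ} (h : AdmDiv f a d) : AdmDiv f a |d| := by
  obtain ⟨hdvd, hgcd⟩ := h
  rcases abs_choice d with hd | hd <;> rw [hd]
  · exact ⟨hdvd, hgcd⟩
  · refine ⟨neg_dvd.mpr hdvd, ?_⟩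
    rwa [Int.ediv_neg, Int.neg_gcd, Int.gcd_neg]

-- `gcd(H(a), G(a))` divides both `f(a)` and `f'(a) = H'(a) G(a) + H(a) G'(a)`.
theorem admDiv_eval_of_dvd {f H : ℤ[X]} {a : ℤ} (hH : H ∣ f) (ha : f.eval a ≠ 0) :
    AdmDiv f a (H.eval a) := by
  obtain ⟨G, rfl⟩ := hH
  rw [eval_mul] at ha
  refine ⟨eval_mul (p := H) ▸ dvd_mul_right _ _, ?_⟩
  rw [eval_mul, Int.mul_ediv_cancel_left _ (left_ne_zero_of_mul ha)]
  apply Int.dvd_gcd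
  · exact dvd_mul_of_dvd_left (Int.gcd_dvd_left _ _) _
  · rw [derivative_mul, eval_add, eval_mul, eval_mul]
    exact dvd_add (dvd_mul_of_dvd_right (Int.gcd_dvd_right _ _) _)
      (dvd_mul_of_dvd_left (Int.gcd_dvd_left _ _) _)

theorem lt_abs_eval_div_abs_eval_of_dvd {f H : ℤ[X]} {a b : ℤ} {q : ℝ} (hq : 1 ≤ q)
    (hH : H ∣ f) (hdeg : 0 < H.natDegree) (ha : H.eval a ≠ 0)
    (hroots : ∀ θ : ℂ, aeval θ f = 0 → q * ‖(a : ℂ) - θ‖ < ‖(b : ℂ) - θ‖) :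
    q < |((H.eval b : ℤ) : ℝ)| / |((H.eval a : ℤ) : ℝ)| := by
  set P := H.map (Int.castRingHom ℂ)
  have hPdeg : P.natDegree = H.natDegree := natDegree_map_eq_of_injective Int.cast_injective H
  have hPeval : ∀ x : ℤ, ‖P.eval (x : ℂ)‖ = |((H.eval x : ℤ) : ℝ)| := fun x => by
    rw [eval_intCast_map, Int.cast_id, eq_intCast, Complex.norm_intCast]
  have hPa : P.eval (a : ℂ) ≠ 0 := by
    rw [← norm_ne_zero_iff, hPeval]
    exact_mod_cast abs_ne_zero.mpr ha
  have hProots : ∀ θ, P.IsRoot θ → q * ‖(a : ℂ) - θ‖ < ‖(b : ℂ) - θ‖ := fun θ hθ =>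
    hroots θ (aeval_eq_zero_of_dvd_aeval_eq_zero hH (by rwa [aeval_def, eval₂_eq_eval_map]))
  have hlt := pow_natDegree_mul_norm_eval_lt (by linarith) (hPdeg ▸ hdeg) hPa hProots
  rw [hPdeg, hPeval, hPeval] at hlt
  rw [lt_div_iff₀ (by exact_mod_cast abs_pos.mpr ha)]
  calc q * |((H.eval a : ℤ) : ℝ)| ≤ q ^ H.natDegree * |((H.eval a : ℤ) : ℝ)| := by
        gcongr
        exact le_self_pow₀ hq hdeg.ne'
    _ < |((H.eval b : ℤ) : ℝ)| := hlt

theorem Finset.exists_le_prod_rpow_inv_card {ι : Type*} {s : Finset ι} (hs : s.Nonempty)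
    {r : ι → ℝ} (hr : ∀ i ∈ s, 0 ≤ r i) :
    ∃ i ∈ s, r i ≤ (∏ j ∈ s, r j) ^ ((s.card : ℝ)⁻¹) := by
  obtain ⟨i, hi, hmin⟩ := s.exists_min_image r hs
  refine ⟨i, hi, ?_⟩
  rw [Real.le_rpow_inv_iff_of_pos (hr i hi) (prod_nonneg hr) (by exact_mod_cast hs.card_pos),
    Real.rpow_natCast, ← prod_const]
  exact prod_le_prod (fun _ _ => hr i hi) hmin

theorem stmt3_general (f : Polynomial ℤ) (a b : ℤ) (k : ℕ)
    (ha : f.eval a ≠ 0)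
    (q : ℝ) (hq : IsQk f a b k q) (hq1 : 1 < q)
    (hroots : ∀ θ : ℂ, aeval θ f = 0 →
      q * ‖(a : ℂ) - θ‖ < ‖(b : ℂ) - θ‖) :
    FactorsAtMost f k := by
  intro g hg hfg
  have hb : f.eval b ≠ 0 := fun h => by
    have hb := hroots b <| by
      rw [aeval_def, eval₂_eq_eval_map, eval_intCast_map, Int.cast_id, h, map_zero]
    rw [sub_self, norm_zero] at hb
    exact hb.not_ge (mul_nonneg (by linarith) (norm_nonneg _))
  obtain ⟨H, hfH, hdeg⟩ := exists_prod_eq_of_map_eq_C_mul_prod f g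
    (fun i => ne_zero_of_natDegree_gt (hg i)) one_ne_zero (by rw [C_1, one_mul]; exact hfg)
  have hHf : ∀ i, H i ∣ f := fun i => hfH ▸ Finset.dvd_prod_of_mem H (Finset.mem_univ i)
  have hHa : ∀ i, (H i).eval a ≠ 0 := fun i h =>
    ha (eval_eq_zero_of_dvd_of_eval_eq_zero (hHf i) h)
  set r : Fin (k + 1) → ℝ := fun i => |(((H i).eval b : ℤ) : ℝ)| / |(((H i).eval a : ℤ) : ℝ)|
  have hprod : ∏ i, r i = |((f.eval b : ℤ) : ℝ)| / |((f.eval a : ℤ) : ℝ)| := by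
    simp only [r, hfH, eval_prod, Int.cast_prod, Finset.abs_prod, Finset.prod_div_distrib]
  obtain ⟨i, -, hi⟩ := Finset.exists_le_prod_rpow_inv_card Finset.univ_nonempty
    (fun i _ => div_nonneg (abs_nonneg _) (abs_nonneg _) : ∀ i ∈ Finset.univ, 0 ≤ r i)
  rw [hprod, Finset.card_univ, Fintype.card_fin, Nat.cast_succ] at hi
  have hmem : r i ≤ q := hq.2 ⟨|(H i).eval a|, |(H i).eval b|,
    (admDiv_eval_of_dvd (hHf i) ha).abs, (admDiv_eval_of_dvd (hHf i) hb).abs, by push_cast; rfl, hi⟩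
  exact hmem.not_gt (lt_abs_eval_div_abs_eval_of_dvd hq1.le (hHf i) (hdeg i ▸ hg i) (hHa i) hroots)

theorem stmt3 (f : Polynomial ℤ) (a b : ℤ) (k : ℕ) (hk : 1 ≤ k)
    (ha : f.eval a ≠ 0) (hab : |f.eval a| < |f.eval b|)
    (q : ℝ) (hq : IsQk f a b k q) (hq1 : 1 < q)
    (hroots : ∀ θ : ℂ, aeval θ f = 0 →
      q * ‖(a : ℂ) - θ‖ < ‖(b : ℂ) - θ‖) :
    FactorsAtMost f k :=
  stmt3_general f a b k ha q hq hq1 hroots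
end
end

section
/- Let f ∈ ℤ[X] with 0 < |f(a)| < |f(b)| for integers a < b, let k ≥ 1, and suppose q_k = 1 (with q_k defined via admissible divisors). If every complex root θ of f has real part Re(θ) < (a+b)/2, then f is a product of at most k irreducible factors over ℚ. -/
open Polynomial Real

noncomputable section

section Aux

lemma my_prod_le {α : Type*} (F G : α → ℝ) : ∀ (s : Multiset α),
    (∀ x ∈ s, 0 ≤ F x) → (∀ x ∈ s, F x ≤ G x) →
    (s.map F).prod ≤ (s.map G).prod := by
  intro s
  induction s using Multiset.induction_on with
  | empty => simp
  | cons x t ih =>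
    intro h0 hle
    simp only [Multiset.map_cons, Multiset.prod_cons]
    have hF : 0 ≤ (t.map F).prod := Multiset.prod_nonneg (by
      intro y hy; obtain ⟨z, hz, rfl⟩ := Multiset.mem_map.mp hy
      exact h0 z (Multiset.mem_cons_of_mem hz))
    have h1 : F x ≤ G x := hle x (Multiset.mem_cons_self x t)
    have h2 := ih (fun y hy => h0 y (Multiset.mem_cons_of_mem hy))
      (fun y hy => hle y (Multiset.mem_cons_of_mem hy))
    have h0x : 0 ≤ F x := h0 x (Multiset.mem_cons_self x t)
    calc F x * (t.map F).prod ≤ G x * (t.map F).prod :=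
          mul_le_mul_of_nonneg_right h1 hF
      _ ≤ G x * (t.map G).prod := mul_le_mul_of_nonneg_left h2 (le_trans h0x h1)

lemma my_prod_lt {α : Type*} (F G : α → ℝ) (s : Multiset α) (hs : s ≠ 0)
    (h0 : ∀ x ∈ s, 0 < F x) (hlt : ∀ x ∈ s, F x < G x) :
    (s.map F).prod < (s.map G).prod := by
  obtain ⟨x, hx⟩ := Multiset.exists_mem_of_ne_zero hs
  obtain ⟨t, rfl⟩ := Multiset.exists_cons_of_mem hx
  simp only [Multiset.map_cons, Multiset.prod_cons]
  have hFt : 0 < (t.map F).prod := Multiset.prod_pos (by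
    intro y hy; obtain ⟨z, hz, rfl⟩ := Multiset.mem_map.mp hy
    exact h0 z (Multiset.mem_cons_of_mem hz))
  have h2 : (t.map F).prod ≤ (t.map G).prod :=
    my_prod_le F G t (fun y hy => (h0 y (Multiset.mem_cons_of_mem hy)).le)
      (fun y hy => (hlt y (Multiset.mem_cons_of_mem hy)).le)
  have h1 := hlt x (Multiset.mem_cons_self x t)
  calc F x * (t.map F).prod < G x * (t.map F).prod := mul_lt_mul_of_pos_right h1 hFt
    _ ≤ G x * (t.map G).prod := mul_le_mul_of_nonneg_left h2
        (le_trans (h0 x (Multiset.mem_cons_self x t)).le h1.le)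

/-- Key analytic step: if all complex roots of `G` lie strictly to the left of
`(a+b)/2`, with `a < b` and `G(a) ≠ 0`, then `|G(a)| < |G(b)|`. -/
lemma eval_abs_lt (G : Polynomial ℤ) (a b : ℤ) (haltb : a < b)
    (hdeg : 0 < G.natDegree) (hGa : G.eval a ≠ 0)
    (hroots : ∀ θ : ℂ, aeval θ G = 0 → θ.re < ((a : ℝ) + (b : ℝ)) / 2) :
    |G.eval a| < |G.eval b| := by
  set Gc : Polynomial ℂ := G.map (Int.castRingHom ℂ) with hGc
  have hsplit : Splits Gc := IsAlgClosed.splits Gc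
  have hcard : Multiset.card Gc.roots = Gc.natDegree := splits_iff_card_roots.mp hsplit
  have hdegc : Gc.natDegree = G.natDegree :=
    natDegree_map_eq_of_injective Int.cast_injective G
  have hroots0 : Gc.roots ≠ 0 := by
    intro h
    rw [h] at hcard
    simp [hdegc] at hcard
    omega
  have hmem : ∀ θ ∈ Gc.roots, aeval θ G = 0 := by
    intro θ hθ
    have := isRoot_of_mem_roots hθ
    rwa [IsRoot, hGc, eval_map, ← algebraMap_int_eq, ← aeval_def] at this
  have heval : ∀ x : ℂ, ‖Gc.eval x‖ =
      ‖Gc.leadingCoeff‖ *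
      (Gc.roots.map fun θ => ‖x - θ‖).prod := by
    intro x
    conv_lhs => rw [hsplit.eq_prod_roots]
    rw [eval_mul, eval_C, norm_mul, eval_multiset_prod, Multiset.map_map]
    congr 1
    rw [show ∀ m : Multiset ℂ, ‖m.prod‖ = (m.map (‖·‖)).prod from
      fun m => map_multiset_prod (normHom : ℂ →*₀ ℝ) m, Multiset.map_map]
    congr 1
    ext θ
    simp
  have hGa' : ∀ θ ∈ Gc.roots, 0 < ‖(a : ℂ) - θ‖ := by
    intro θ hθ
    rw [norm_pos_iff, sub_ne_zero]
    intro h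
    apply hGa
    have h2 := hmem θ hθ
    rw [← h, aeval_def, algebraMap_int_eq, ← eval_map,
      Polynomial.eval_intCast_map] at h2
    rw [eq_intCast] at h2
    exact_mod_cast h2
  have hlt : ∀ θ ∈ Gc.roots, ‖(a : ℂ) - θ‖ < ‖(b : ℂ) - θ‖ := by
    intro θ hθ
    have hre := hroots θ (hmem θ hθ)
    have hab' : (a : ℝ) < (b : ℝ) := by exact_mod_cast haltb
    have h1 : ‖(a : ℂ) - θ‖ ^ 2 < ‖(b : ℂ) - θ‖ ^ 2 := by
      rw [Complex.sq_norm, Complex.sq_norm]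
      simp only [Complex.normSq_apply, Complex.sub_re, Complex.sub_im,
        Complex.intCast_re, Complex.intCast_im]
      nlinarith [hre, hab']
    nlinarith [norm_nonneg ((a : ℂ) - θ), norm_nonneg ((b : ℂ) - θ)]
  have key : ‖Gc.eval (a : ℂ)‖ < ‖Gc.eval (b : ℂ)‖ := by
    rw [heval, heval]
    have hlc : 0 < ‖Gc.leadingCoeff‖ := by
      rw [norm_pos_iff, Ne, leadingCoeff_eq_zero]
      intro h
      rw [h] at hdegc
      simp at hdegc; omega
    exact mul_lt_mul_of_pos_left (my_prod_lt _ _ _ hroots0 hGa' hlt) hlc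
  have ea : Gc.eval (a : ℂ) = ((G.eval a : ℤ) : ℂ) := by
    rw [hGc]; exact_mod_cast Polynomial.eval_intCast_map (Int.castRingHom ℂ) G a
  have eb : Gc.eval (b : ℂ) = ((G.eval b : ℤ) : ℂ) := by
    rw [hGc]; exact_mod_cast Polynomial.eval_intCast_map (Int.castRingHom ℂ) G b
  rw [ea, eb] at key
  simp only [Complex.norm_intCast] at key
  exact_mod_cast key

lemma exists_primitive_scalar (g : Polynomial ℚ) (hg : g ≠ 0) :
    ∃ (G : Polynomial ℤ) (c : ℚ), c ≠ 0 ∧ G.IsPrimitive ∧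
      G.map (Int.castRingHom ℚ) = C c * g := by
  obtain ⟨b, hb⟩ := IsLocalization.integerNormalization_map_to_map (nonZeroDivisors ℤ) g
  set N : Polynomial ℤ := IsLocalization.integerNormalization (nonZeroDivisors ℤ) g with hN
  have hb0 : (b : ℤ) ≠ 0 := nonZeroDivisors.coe_ne_zero b
  have hsm : (b : ℤ) • g = C ((b : ℤ) : ℚ) * g := by
    rw [zsmul_eq_mul]
    norm_cast
  rw [hsm] at hb
  have hbq : ((b : ℤ) : ℚ) ≠ 0 := Int.cast_ne_zero.mpr hb0
  have hN0 : N ≠ 0 := by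
    intro h
    rw [h, Polynomial.map_zero, eq_comm, mul_eq_zero] at hb
    rcases hb with h' | h'
    · exact hbq (by simpa using h')
    · exact hg h'
  have hcont : N.content ≠ 0 := fun h => hN0 (content_eq_zero_iff.mp h)
  have hc : ((N.content : ℤ) : ℚ) ≠ 0 := Int.cast_ne_zero.mpr (by exact_mod_cast hcont)
  refine ⟨N.primPart, ((b : ℤ) : ℚ) / ((N.content : ℤ) : ℚ), div_ne_zero hbq hc,
    N.isPrimitive_primPart, ?_⟩
  have h1 : C (((N.content : ℤ)) : ℚ) * N.primPart.map (Int.castRingHom ℚ)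
      = C ((b : ℤ) : ℚ) * g := by
    rw [← hb, ← algebraMap_int_eq]
    conv_rhs => rw [N.eq_C_content_mul_primPart]
    rw [Polynomial.map_mul, map_C]
    simp
  have h2 : C ((N.content : ℤ) : ℚ) * (C (((b : ℤ) : ℚ) / ((N.content : ℤ) : ℚ)) * g)
      = C ((N.content : ℤ) : ℚ) * N.primPart.map (Int.castRingHom ℚ) := by
    rw [h1, ← mul_assoc, ← C_mul]
    congr 2
    field_simp
  exact (mul_left_cancel₀ (by simpa using hc) h2).symm

lemma lift_factors {n : ℕ} (f : Polynomial ℤ) (hf : f ≠ 0) (g : Fin (n + 1) → Polynomial ℚ)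
    (hdeg : ∀ i, 0 < (g i).natDegree)
    (h : f.map (Int.castRingHom ℚ) = ∏ i, g i) :
    ∃ G : Fin (n + 1) → Polynomial ℤ, f = ∏ i, G i ∧ ∀ i, 0 < (G i).natDegree := by
  have hg0 : ∀ i, g i ≠ 0 := fun i hi => by simpa [hi] using hdeg i
  choose P c hc hprim hmap using fun i => exists_primitive_scalar (g i) (hg0 i)
  set Q : Polynomial ℤ := ∏ i, P i with hQ
  have hQprim : Q.IsPrimitive :=
    Finset.prod_induction P IsPrimitive (fun _ _ ha hb => ha.mul hb)
      isPrimitive_one (fun i _ => hprim i)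
  have hPdeg : ∀ i, (P i).natDegree = (g i).natDegree := by
    intro i
    rw [← natDegree_map_eq_of_injective ((Int.castRingHom ℚ).injective_int) (P i), hmap i,
      natDegree_C_mul (hc i)]
  have hcprod : (∏ i, c i) ≠ 0 := Finset.prod_ne_zero_iff.mpr fun i _ => hc i
  have hQmap : Q.map (Int.castRingHom ℚ) = C (∏ i, c i) * f.map (Int.castRingHom ℚ) := by
    rw [hQ, Polynomial.map_prod, h]
    calc (∏ i, (P i).map (Int.castRingHom ℚ)) = ∏ i, (C (c i) * g i) :=
          Finset.prod_congr rfl fun i _ => hmap i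
      _ = (∏ i, C (c i)) * ∏ i, g i := Finset.prod_mul_distrib
      _ = C (∏ i, c i) * ∏ i, g i := by rw [map_prod]
  have hcontf : f.content ≠ 0 := fun h' => hf (content_eq_zero_iff.mp h')
  have hfp : f = C f.content * f.primPart := f.eq_C_content_mul_primPart
  have hmapfp : f.map (Int.castRingHom ℚ) =
      C ((f.content : ℤ) : ℚ) * f.primPart.map (Int.castRingHom ℚ) := by
    conv_lhs => rw [hfp]
    rw [Polynomial.map_mul, map_C]
    simp
  have hcq : ((f.content : ℤ) : ℚ) ≠ 0 := Int.cast_ne_zero.mpr hcontf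
  have h1 : f.primPart ∣ Q := by
    rw [IsPrimitive.Int.dvd_iff_map_cast_dvd_map_cast _ _ (isPrimitive_primPart f)]
    refine ⟨C (∏ i, c i) * C ((f.content : ℤ) : ℚ), ?_⟩
    rw [hQmap, hmapfp]; ring
  have h2 : Q ∣ f.primPart := by
    rw [IsPrimitive.Int.dvd_iff_map_cast_dvd_map_cast _ _ hQprim]
    refine ⟨C ((∏ i, c i)⁻¹ * ((f.content : ℤ) : ℚ)⁻¹), ?_⟩
    rw [hQmap, hmapfp]
    have hone : C ((∏ i, c i)⁻¹ * ((f.content : ℤ) : ℚ)⁻¹) *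
        (C (∏ i, c i) * C ((f.content : ℤ) : ℚ)) = 1 := by
      rw [← C_mul, ← C_mul, ← C_1]
      congr 1
      field_simp
    calc f.primPart.map (Int.castRingHom ℚ)
        = (C ((∏ i, c i)⁻¹ * ((f.content : ℤ) : ℚ)⁻¹) *
            (C (∏ i, c i) * C ((f.content : ℤ) : ℚ))) *
            f.primPart.map (Int.castRingHom ℚ) := by rw [hone, one_mul]
      _ = C (∏ i, c i) * (C ((f.content : ℤ) : ℚ) * f.primPart.map (Int.castRingHom ℚ)) *
            C ((∏ i, c i)⁻¹ * ((f.content : ℤ) : ℚ)⁻¹) := by ring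
  obtain ⟨u, hu⟩ := associated_of_dvd_dvd h2 h1
  have hfeq : f = ((C f.content * (u : Polynomial ℤ)) * P 0) * ∏ i : Fin n, P i.succ := by
    conv_lhs => rw [hfp, ← hu]
    rw [hQ, Fin.prod_univ_succ]
    ring
  refine ⟨Function.update P 0 ((C f.content * (u : Polynomial ℤ)) * P 0), ?_, ?_⟩
  · rw [Fin.prod_univ_succ, Function.update_self,
      Finset.prod_congr rfl (fun (i : Fin n) _ =>
        Function.update_of_ne (Fin.succ_ne_zero i) _ P)]
    exact hfeq
  · intro i
    by_cases hi : i = 0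
    · subst hi
      rw [Function.update_self]
      have hu0 : (u : Polynomial ℤ) ≠ 0 := Units.ne_zero u
      have hP0 : P 0 ≠ 0 := (hprim 0).ne_zero
      rw [natDegree_mul (mul_ne_zero (C_ne_zero.mpr hcontf) hu0) hP0,
        natDegree_mul (C_ne_zero.mpr hcontf) hu0, natDegree_C,
        natDegree_eq_zero_of_isUnit u.isUnit]
      simpa [hPdeg] using hdeg 0
    · rw [Function.update_of_ne hi]
      simpa [hPdeg] using hdeg i

lemma admdiv_neg {f : Polynomial ℤ} {a d : ℤ} (h : AdmDiv f a d) : AdmDiv f a (-d) := by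
  obtain ⟨⟨e, he⟩, h2⟩ := h
  by_cases hd : d = 0
  · subst hd
    rw [neg_zero]
    exact ⟨⟨e, he⟩, h2⟩
  constructor
  · exact ⟨-e, by rw [he]; ring⟩
  · have h1 : f.eval a / d = e := by rw [he]; exact Int.mul_ediv_cancel_left e hd
    have h3 : f.eval a / (-d) = -e := by
      rw [he, show d * e = (-d) * (-e) by ring]
      exact Int.mul_ediv_cancel_left (-e) (neg_ne_zero.mpr hd)
    rw [h3]
    rw [h1] at h2
    simpa [Int.gcd, Int.natAbs_neg] using h2

lemma admdiv_abs {f : Polynomial ℤ} {a d : ℤ} (h : AdmDiv f a d) : AdmDiv f a |d| := by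
  rcases abs_choice d with h' | h' <;> rw [h']
  · exact h
  · exact admdiv_neg h

lemma admdiv_factor {f G H : Polynomial ℤ} {a : ℤ} (hf : f = G * H)
    (ha : f.eval a ≠ 0) : AdmDiv f a (G.eval a) := by
  have heval : f.eval a = G.eval a * H.eval a := by rw [hf, eval_mul]
  have hG0 : G.eval a ≠ 0 := fun h => ha (by rw [heval, h, zero_mul])
  have hdiv : f.eval a / G.eval a = H.eval a := by
    rw [heval]; exact Int.mul_ediv_cancel_left _ hG0
  refine ⟨⟨H.eval a, heval⟩, ?_⟩
  rw [hdiv]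
  have hd : f.derivative.eval a =
      G.derivative.eval a * H.eval a + G.eval a * H.derivative.eval a := by
    rw [hf, derivative_mul, eval_add, eval_mul, eval_mul]
  set e : ℤ := (Int.gcd (G.eval a) (H.eval a) : ℤ) with he
  have e1 : e ∣ G.eval a := Int.gcd_dvd_left _ _
  have e2 : e ∣ H.eval a := Int.gcd_dvd_right _ _
  have e3 : e ∣ f.eval a := heval ▸ e1.mul_right _
  have e4 : e ∣ f.derivative.eval a := by
    rw [hd]
    exact dvd_add (e2.mul_left _) (e1.mul_right _)
  exact Int.natCast_dvd_natCast.mp (Int.dvd_coe_gcd e3 e4)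

end Aux

theorem stmt5 (f : Polynomial ℤ) (a b : ℤ) (k : ℕ) (hk : 1 ≤ k)
    (ha : f.eval a ≠ 0) (hab : |f.eval a| < |f.eval b|) (haltb : a < b)
    (hq : IsQk f a b k 1)
    (hroots : ∀ θ : ℂ, aeval θ f = 0 → θ.re < ((a : ℝ) + (b : ℝ)) / 2) :
    FactorsAtMost f k := by
  intro g hdeg heq
  have hf0 : f ≠ 0 := fun h => ha (by rw [h, eval_zero])
  obtain ⟨G, hfeq, hGdeg⟩ := lift_factors f hf0 g hdeg heq
  set A : Fin (k + 1) → ℤ := fun i => (G i).eval a with hA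
  set B : Fin (k + 1) → ℤ := fun i => (G i).eval b with hB
  have hfa : f.eval a = ∏ i, A i := by rw [hfeq, eval_prod]
  have hfb : f.eval b = ∏ i, B i := by rw [hfeq, eval_prod]
  have hb0 : f.eval b ≠ 0 := by
    intro h
    rw [h] at hab
    simp only [abs_zero] at hab
    have := abs_nonneg (f.eval a)
    omega
  have hAne : ∀ i, A i ≠ 0 := by
    intro i hi
    exact ha (by rw [hfa]; exact Finset.prod_eq_zero (Finset.mem_univ i) hi)
  have hGroots : ∀ i (θ : ℂ), aeval θ (G i) = 0 → θ.re < ((a : ℝ) + (b : ℝ)) / 2 := by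
    intro i θ h
    apply hroots
    rw [hfeq, map_prod]
    exact Finset.prod_eq_zero (Finset.mem_univ i) h
  have hlt : ∀ i, |A i| < |B i| := fun i =>
    eval_abs_lt (G i) a b haltb (hGdeg i) (hAne i) (hGroots i)
  have hsplit : ∀ i, f = G i * ∏ j ∈ Finset.univ.erase i, G j := fun i => by
    rw [hfeq, ← Finset.mul_prod_erase Finset.univ G (Finset.mem_univ i)]
  have admA : ∀ i, AdmDiv f a |A i| := fun i => admdiv_abs (admdiv_factor (hsplit i) ha)
  have admB : ∀ i, AdmDiv f b |B i| := fun i => admdiv_abs (admdiv_factor (hsplit i) hb0)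
  set r : Fin (k + 1) → ℝ := fun i => ((|B i| : ℤ) : ℝ) / ((|A i| : ℤ) : ℝ) with hr
  have hApos : ∀ i, (0 : ℝ) < ((|A i| : ℤ) : ℝ) := fun i => by
    have := abs_pos.mpr (hAne i); exact_mod_cast this
  have hr1 : ∀ i, 1 < r i := fun i => by
    rw [hr]
    rw [lt_div_iff₀ (hApos i), one_mul]
    exact_mod_cast hlt i
  set y : ℝ := |((f.eval b : ℤ) : ℝ)| / |((f.eval a : ℤ) : ℝ)| with hy
  have hrprod : ∏ i, r i = y := by
    rw [hr, hy, Finset.prod_div_distrib]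
    congr 1
    · rw [hfb]; push_cast; rw [Finset.abs_prod]
    · rw [hfa]; push_cast; rw [Finset.abs_prod]
  obtain ⟨i₀, -, hmin⟩ := Finset.exists_min_image Finset.univ r ⟨0, Finset.mem_univ 0⟩
  have h0 : (0 : ℝ) ≤ r i₀ := le_trans zero_le_one (hr1 i₀).le
  have hxpow : r i₀ ^ (k + 1) ≤ y := by
    rw [← hrprod]
    calc r i₀ ^ (k + 1) = ∏ _i : Fin (k + 1), r i₀ := by
          rw [Finset.prod_const, Finset.card_univ, Fintype.card_fin]
      _ ≤ ∏ i, r i := Finset.prod_le_prod (fun i _ => h0) (fun i _ => hmin i (Finset.mem_univ i))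
  have hkne : ((k : ℝ) + 1) ≠ 0 := by positivity
  have hcast : r i₀ ^ (((k : ℝ)) + 1) = r i₀ ^ (k + 1 : ℕ) := by
    rw [show ((k : ℝ) + 1) = ((k + 1 : ℕ) : ℝ) by push_cast; ring, Real.rpow_natCast]
  have hxle : r i₀ ≤ y ^ (((k : ℝ)) + 1)⁻¹ := by
    calc r i₀ = (r i₀ ^ (((k : ℝ)) + 1)) ^ (((k : ℝ)) + 1)⁻¹ :=
          (Real.rpow_rpow_inv h0 hkne).symm
      _ ≤ y ^ (((k : ℝ)) + 1)⁻¹ := by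
          refine Real.rpow_le_rpow ?_ ?_ (by positivity)
          · rw [hcast]; positivity
          · rw [hcast]; exact hxpow
  have hmem : r i₀ ∈ {x : ℝ | ∃ d₁ d₂ : ℤ, AdmDiv f a d₁ ∧ AdmDiv f b d₂ ∧
      x = (d₂ : ℝ) / (d₁ : ℝ) ∧
      x ≤ (|((f.eval b : ℤ) : ℝ)| / |((f.eval a : ℤ) : ℝ)|) ^ ((k + 1 : ℝ))⁻¹} :=
    ⟨|A i₀|, |B i₀|, admA i₀, admB i₀, rfl, hxle⟩
  have hle1 : r i₀ ≤ 1 := hq.2 hmem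
  exact absurd hle1 (not_le.mpr (hr1 i₀))
end
end

section
/- Let f ∈ ℤ[X] with 0 < |f(a)| < |f(b)| for integers a, b, let M be the maximum of the absolute values of the complex roots of f, let k ≥ 1 and let q_k be defined via admissible divisors. If |b| > q_k·|a| + (1 + q_k)·M, then f is a product of at most k irreducible factors over ℚ. -/
/-!
If `f = g₀ ⋯ gₖ` over `ℚ` with nonconstant factors, then `∏ |gᵢ(b)| / |gᵢ(a)| = |f(b)| / |f(a)|`,
so some factor satisfies `|gᵢ(b)| / |gᵢ(a)| ≤ (|f(b)| / |f(a)|)^(1/(k+1))`. By Gauss's lemma a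
rational multiple `G` of `gᵢ` divides `f` in `ℤ[X]`. Writing `f = G H`, the number
`gcd (G(t), H(t))` divides both `f(t)` and `f'(t) = G'(t) H(t) + G(t) H'(t)`, so `|G(a)|` and
`|G(b)|` are admissible divisors and `|G(b)| / |G(a)| ≤ q`. On the other hand, factoring `G` over
`ℂ`, all of whose roots lie in the disc of radius `M`, gives
`|G(b)| / |G(a)| ≥ ((|b| - M) / (|a| + M))^(deg G) > q^(deg G) ≥ q`, using `q ≥ 1` (take
`d₁ = d₂ = 1`).
-/

open Polynomial Real

noncomputable section

namespace Polynomial.Splits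

variable {K : Type*} [NormedField K] {P : K[X]} {M : ℝ}

theorem norm_eval_eq_prod_roots (hP : P.Splits) (z : K) :
    ‖P.eval z‖ = ‖P.leadingCoeff‖ * (P.roots.map (‖z - ·‖)).prod := by
  rw [hP.eval_eq_prod_roots, norm_mul, ← normHom_apply (P.roots.map _).prod, map_multiset_prod,
    Multiset.map_map]
  rfl

theorem norm_eval_le (hP : P.Splits) (hM : ∀ θ ∈ P.roots, ‖θ‖ ≤ M) (z : K) :
    ‖P.eval z‖ ≤ ‖P.leadingCoeff‖ * (‖z‖ + M) ^ P.natDegree := by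
  have hroots : (P.roots.map (‖z - ·‖)).prod ≤ (P.roots.map fun _ ↦ ‖z‖ + M).prod :=
    Multiset.prod_map_le_prod_map₀ _ _ (fun _ _ ↦ norm_nonneg _)
      fun θ hθ ↦ (norm_sub_le _ _).trans (by linarith [hM θ hθ])
  rw [hP.norm_eval_eq_prod_roots, hP.natDegree_eq_card_roots]
  rw [Multiset.map_const', Multiset.prod_replicate] at hroots
  gcongr

theorem le_norm_eval (hP : P.Splits) (hM : ∀ θ ∈ P.roots, ‖θ‖ ≤ M) {z : K} (hz : M ≤ ‖z‖) :
    ‖P.leadingCoeff‖ * (‖z‖ - M) ^ P.natDegree ≤ ‖P.eval z‖ := by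
  have hroots : (P.roots.map fun _ ↦ ‖z‖ - M).prod ≤ (P.roots.map (‖z - ·‖)).prod :=
    Multiset.prod_map_le_prod_map₀ _ _ (fun _ _ ↦ sub_nonneg.2 hz)
      fun θ hθ ↦ (by linarith [hM θ hθ] : ‖z‖ - M ≤ ‖z‖ - ‖θ‖).trans (norm_sub_norm_le _ _)
  rw [hP.norm_eval_eq_prod_roots, hP.natDegree_eq_card_roots]
  rw [Multiset.map_const', Multiset.prod_replicate] at hroots
  gcongr

theorem mul_norm_eval_lt (hP : P.Splits) (hdeg : 0 < P.natDegree)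
    (hM : ∀ θ ∈ P.roots, ‖θ‖ ≤ M) {q : ℝ} (hq : 1 ≤ q) {z w : K}
    (h : q * ‖z‖ + (1 + q) * M < ‖w‖) : q * ‖P.eval z‖ < ‖P.eval w‖ := by
  have hP0 : P ≠ 0 := ne_zero_of_natDegree_gt hdeg
  obtain ⟨θ, hθ⟩ := hP.exists_eval_eq_zero (degree_ne_of_natDegree_ne hdeg.ne')
  have hM0 : 0 ≤ M := (norm_nonneg θ).trans (hM θ ((mem_roots hP0).2 hθ))
  have hL : 0 < ‖P.leadingCoeff‖ := by simpa using hP0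
  have hzw : q * (‖z‖ + M) < ‖w‖ - M := by linarith
  calc q * ‖P.eval z‖ ≤ q * (‖P.leadingCoeff‖ * (‖z‖ + M) ^ P.natDegree) := by
        gcongr
        exact hP.norm_eval_le hM z
    _ ≤ q ^ P.natDegree * (‖P.leadingCoeff‖ * (‖z‖ + M) ^ P.natDegree) := by
        gcongr
        exact le_self_pow₀ hq hdeg.ne'
    _ = ‖P.leadingCoeff‖ * (q * (‖z‖ + M)) ^ P.natDegree := by
        rw [mul_pow]; ring
    _ < ‖P.leadingCoeff‖ * (‖w‖ - M) ^ P.natDegree := by gcongr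
    _ ≤ ‖P.eval w‖ := hP.le_norm_eval hM (by nlinarith [norm_nonneg z])

end Polynomial.Splits

theorem Polynomial.exists_dvd_map_eq_C_mul {R K : Type*} [CommRing R] [IsDomain R]
    [NormalizedGCDMonoid R] [Field K] [Algebra R K] [IsFractionRing R K] {f : R[X]} {g : K[X]}
    (hg0 : g ≠ 0) (hg : g ∣ f.map (algebraMap R K)) :
    ∃ G : R[X], G ∣ f ∧ ∃ c : K, c ≠ 0 ∧ G.map (algebraMap R K) = C c * g := by
  obtain ⟨b, hb, hN⟩ := IsLocalization.integerNormalization_spec (nonZeroDivisors R) g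
  set N := IsLocalization.integerNormalization (nonZeroDivisors R) g
  rw [Algebra.smul_def, algebraMap_apply] at hN
  have hN0 : N ≠ 0 := (IsFractionRing.integerNormalization_eq_zero_iff).not.2 hg0
  have hcont : algebraMap R K N.content ≠ 0 := by
    simpa [content_eq_zero_iff] using hN0
  have hb0 : algebraMap R K b ≠ 0 := by
    simpa using nonZeroDivisors.ne_zero hb
  have hGc : N.primPart.map (algebraMap R K) =
      C ((algebraMap R K N.content)⁻¹ * algebraMap R K b) * g := by
    apply mul_left_cancel₀ (C_ne_zero.2 hcont)
    rw [← mul_assoc, ← C_mul, mul_inv_cancel_left₀ hcont, ← hN]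
    conv_rhs => rw [N.eq_C_content_mul_primPart, Polynomial.map_mul, map_C]
  have hc : (algebraMap R K N.content)⁻¹ * algebraMap R K b ≠ 0 :=
    mul_ne_zero (inv_ne_zero hcont) hb0
  refine ⟨N.primPart, (isPrimitive_primPart N).dvd_of_fraction_map_dvd_fraction_map (K := K) ?_,
    _, hc, hGc⟩
  rwa [hGc, (isUnit_C.2 (Ne.isUnit hc)).mul_left_dvd]

theorem admDiv_abs_eval_of_eq_mul {f G H : ℤ[X]} (hf : f = G * H) {t : ℤ} (ht : f.eval t ≠ 0) :
    AdmDiv f t |G.eval t| := by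
  have hft : f.eval t = G.eval t * H.eval t := by rw [hf, eval_mul]
  have hG : G.eval t ≠ 0 := fun h ↦ ht (by rw [hft, h, zero_mul])
  have hf' : f.derivative.eval t =
      G.derivative.eval t * H.eval t + G.eval t * H.derivative.eval t := by
    rw [hf, derivative_mul, eval_add, eval_mul, eval_mul]
  have hgcd : Int.gcd |G.eval t| (f.eval t / |G.eval t|) = Int.gcd (G.eval t) (H.eval t) := by
    rcases abs_choice (G.eval t) with h | h <;> rw [h, hft] <;> simp [Int.gcd, hG]
  refine ⟨(abs_dvd _ _).2 ⟨_, hft⟩, hgcd ▸ Int.dvd_gcd ?_ ?_⟩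
  · rw [hft]; exact (Int.gcd_dvd_left _ _).mul_right _
  · rw [hf']
    exact dvd_add ((Int.gcd_dvd_right _ _).mul_left _) ((Int.gcd_dvd_left _ _).mul_right _)

section IsQk

variable {f : ℤ[X]} {a b : ℤ} {k : ℕ} {q : ℝ}

theorem IsQk.one_le (hq : IsQk f a b k q) (ha : f.eval a ≠ 0) (hab : |f.eval a| ≤ |f.eval b|) :
    1 ≤ q := by
  have hratio : (1 : ℝ) ≤ |((f.eval b : ℤ) : ℝ)| / |((f.eval a : ℤ) : ℝ)| :=
    (one_le_div (by positivity)).2 (by exact_mod_cast hab)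
  exact hq.2 ⟨1, 1, ⟨one_dvd _, by simp⟩, ⟨one_dvd _, by simp⟩, by norm_num,
    by simpa using one_le_rpow hratio (by positivity)⟩

theorem IsQk.abs_eval_le_mul {G H : ℤ[X]} (hq : IsQk f a b k q) (hf : f = G * H)
    (ha : f.eval a ≠ 0) (hb : f.eval b ≠ 0)
    (h : |((G.eval b : ℤ) : ℝ)| ≤ (|((f.eval b : ℤ) : ℝ)| / |((f.eval a : ℤ) : ℝ)|) ^
      ((k + 1 : ℝ))⁻¹ * |((G.eval a : ℤ) : ℝ)|) :
    |((G.eval b : ℤ) : ℝ)| ≤ q * |((G.eval a : ℤ) : ℝ)| := by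
  have hGa : G.eval a ≠ 0 := fun h0 ↦ ha (by rw [hf, eval_mul, h0, zero_mul])
  have hGa' : (0 : ℝ) < |((G.eval a : ℤ) : ℝ)| := by positivity
  have hratio := hq.2 ⟨|G.eval a|, |G.eval b|, admDiv_abs_eval_of_eq_mul hf ha,
    admDiv_abs_eval_of_eq_mul hf hb, rfl, by push_cast; rwa [div_le_iff₀ hGa']⟩
  push_cast at hratio
  rwa [div_le_iff₀ hGa'] at hratio

end IsQk

theorem exists_le_mul_of_prod_le_pow_mul_prod {ι R : Type*} [Fintype ι] [Nonempty ι]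
    [CommSemiring R] [LinearOrder R] [IsStrictOrderedRing R] {u v : ι → R} {r : R} (hr : 0 < r)
    (hu : ∀ i, 0 < u i) (h : ∏ i, v i ≤ r ^ Fintype.card ι * ∏ i, u i) :
    ∃ i, v i ≤ r * u i := by
  by_contra! hlt
  have := Finset.prod_lt_prod_of_nonempty (fun i _ ↦ mul_pos hr (hu i)) (fun i _ ↦ hlt i)
    Finset.univ_nonempty
  rw [Finset.prod_mul_distrib, Finset.prod_const, Finset.card_univ] at this
  exact this.not_ge h

theorem exists_abs_eval_le_mul_of_map_eq_prod {ι : Type*} [Fintype ι] [Nonempty ι] {f : ℤ[X]}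
    {g : ι → ℚ[X]} (hfg : f.map (Int.castRingHom ℚ) = ∏ i, g i) {a b : ℤ} (ha : f.eval a ≠ 0)
    {ρ : ℝ} (hρ : 0 < ρ)
    (hf : |((f.eval b : ℤ) : ℝ)| ≤ ρ ^ Fintype.card ι * |((f.eval a : ℤ) : ℝ)|) :
    ∃ i, |(((g i).eval (b : ℚ) : ℚ) : ℝ)| ≤ ρ * |(((g i).eval (a : ℚ) : ℚ) : ℝ)| := by
  have heval : ∀ t : ℤ, |((f.eval t : ℤ) : ℝ)| = ∏ i, |(((g i).eval (t : ℚ) : ℚ) : ℝ)| := by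
    intro t
    have := congrArg (eval (t : ℚ)) hfg
    rw [eval_intCast_map, eq_intCast, eval_prod] at this
    rw [← Finset.abs_prod, ← Rat.cast_prod, ← this, Rat.cast_intCast, Int.cast_id]
  have hfa : (0 : ℝ) < |((f.eval a : ℤ) : ℝ)| := by positivity
  refine exists_le_mul_of_prod_le_pow_mul_prod hρ (fun i ↦ abs_pos.2 fun h0 ↦ hfa.ne' ?_)
    (by rwa [← heval a, ← heval b])
  rw [heval a]
  exact Finset.prod_eq_zero (Finset.mem_univ i) (by simp [h0])

theorem abs_eval_le_mul_of_map_eq_C_mul {G : ℤ[X]} {g : ℚ[X]} {c : ℚ}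
    (hGc : G.map (algebraMap ℤ ℚ) = C c * g) {a b : ℤ} {ρ : ℝ}
    (h : |((g.eval (b : ℚ) : ℚ) : ℝ)| ≤ ρ * |((g.eval (a : ℚ) : ℚ) : ℝ)|) :
    |((G.eval b : ℤ) : ℝ)| ≤ ρ * |((G.eval a : ℤ) : ℝ)| := by
  have hGt : ∀ t : ℤ, ((G.eval t : ℤ) : ℝ) = c * ((g.eval (t : ℚ) : ℚ) : ℝ) := fun t ↦ by
    have := congrArg (eval (t : ℚ)) hGc
    rw [eval_intCast_map, algebraMap_int_eq, eq_intCast, eval_mul, eval_C] at this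
    exact_mod_cast this
  rw [hGt, hGt, abs_mul, abs_mul, mul_left_comm]
  exact mul_le_mul_of_nonneg_left h (abs_nonneg _)

theorem mul_abs_eval_lt_abs_eval {G : ℤ[X]} (hdeg : 0 < G.natDegree) {M q : ℝ}
    (hM : ∀ θ : ℂ, aeval θ G = 0 → ‖θ‖ ≤ M) (hq : 1 ≤ q) {a b : ℤ}
    (h : q * |(a : ℝ)| + (1 + q) * M < |(b : ℝ)|) :
    q * |((G.eval a : ℤ) : ℝ)| < |((G.eval b : ℤ) : ℝ)| := by
  set P := G.map (algebraMap ℤ ℂ)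
  have hP : 0 < P.natDegree := by
    rwa [natDegree_map_eq_of_injective (RingHom.injective_int _)]
  have hroots : ∀ θ ∈ P.roots, ‖θ‖ ≤ M := fun θ hθ ↦
    hM θ (by rw [← eval_map_algebraMap]; exact isRoot_of_mem_roots hθ)
  have hPt : ∀ t : ℤ, ‖P.eval (t : ℂ)‖ = |((G.eval t : ℤ) : ℝ)| := fun t ↦ by
    rw [eval_intCast_map, algebraMap_int_eq, eq_intCast, Complex.norm_intCast, Int.cast_id]
  simpa only [hPt] using (IsAlgClosed.splits P).mul_norm_eval_lt hP hroots hq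
    (z := (a : ℂ)) (w := (b : ℂ)) (by simpa only [Complex.norm_intCast] using h)

theorem stmt6_general (f : Polynomial ℤ) (a b : ℤ) (k : ℕ)
    (ha : f.eval a ≠ 0) (hab : |f.eval a| < |f.eval b|)
    (M : ℝ) (hM : ∀ θ : ℂ, aeval θ f = 0 → ‖θ‖ ≤ M)
    (q : ℝ) (hq : IsQk f a b k q)
    (hb : (|b| : ℝ) > q * (|a| : ℝ) + (1 + q) * M) :
    FactorsAtMost f k := by
  intro g hg hfg
  have hfb : f.eval b ≠ 0 := fun h0 ↦ (abs_nonneg _).not_gt (by rwa [h0, abs_zero] at hab)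
  set ρ := (|((f.eval b : ℤ) : ℝ)| / |((f.eval a : ℤ) : ℝ)|) ^ ((k + 1 : ℝ))⁻¹ with hρ
  have hρpow : |((f.eval b : ℤ) : ℝ)| = ρ ^ (k + 1) * |((f.eval a : ℤ) : ℝ)| := by
    rw [hρ, ← Nat.cast_succ, rpow_inv_natCast_pow (by positivity) k.succ_ne_zero,
      div_mul_cancel₀ _ (by positivity)]
  obtain ⟨i, hi⟩ := exists_abs_eval_le_mul_of_map_eq_prod hfg ha (ρ := ρ) (by positivity)
    (by rw [Fintype.card_fin, hρpow])
  obtain ⟨G, ⟨H, hGH⟩, c, hc, hGc⟩ := exists_dvd_map_eq_C_mul (ne_zero_of_natDegree_gt (hg i))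
    (by rw [algebraMap_int_eq, hfg]; exact Finset.dvd_prod_of_mem _ (Finset.mem_univ i))
  have hGdeg : 0 < G.natDegree := by
    have := congrArg natDegree hGc
    rw [natDegree_map_eq_of_injective (RingHom.injective_int _), natDegree_C_mul hc] at this
    exact this ▸ hg i
  have hGq := hq.abs_eval_le_mul hGH ha hfb (abs_eval_le_mul_of_map_eq_C_mul hGc hi)
  have hGroots : ∀ θ : ℂ, aeval θ G = 0 → ‖θ‖ ≤ M := fun θ hθ ↦
    hM θ (aeval_eq_zero_of_dvd_aeval_eq_zero ⟨H, hGH⟩ hθ)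
  exact (mul_abs_eval_lt_abs_eval hGdeg hGroots (hq.one_le ha hab.le) hb).not_ge hGq

theorem stmt6 (f : Polynomial ℤ) (a b : ℤ) (k : ℕ) (hk : 1 ≤ k)
    (ha : f.eval a ≠ 0) (hab : |f.eval a| < |f.eval b|)
    (M : ℝ) (hM : ∀ θ : ℂ, aeval θ f = 0 → ‖θ‖ ≤ M)
    (q : ℝ) (hq : IsQk f a b k q)
    (hb : (|b| : ℝ) > q * (|a| : ℝ) + (1 + q) * M) :
    FactorsAtMost f k :=
  stmt6_general f a b k ha hab M hM q hq hb
end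
end

section
/- Let f ∈ ℤ[X] with 0 < |f(a)| < |f(b)| for integers a, b with a² < b², let M be the maximum of the absolute values of the complex roots of f, let k ≥ 1, and suppose q_k = 1 (with q_k defined via admissible divisors). If M < |a+b|/2, then f is a product of at most k irreducible factors over ℚ. -/
open Polynomial Real

noncomputable section

/-- For `f = P * H`, `gcd (P x, H x)` divides `f x` and `f' x = P' x * H x + P x * H' x`. -/
theorem admDiv_eval_of_dvd_s7 {f P : ℤ[X]} {x : ℤ} (hPf : P ∣ f) (hPx : P.eval x ≠ 0) :
    AdmDiv f x (P.eval x) := by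
  obtain ⟨H, rfl⟩ := hPf
  refine ⟨eval_mul (p := P) (q := H) ▸ dvd_mul_right _ _, ?_⟩
  rw [eval_mul, Int.mul_ediv_cancel_left _ hPx, ← Int.natCast_dvd_natCast]
  apply Int.dvd_coe_gcd
  · exact (Int.gcd_dvd_left _ _).mul_right _
  · rw [derivative_mul, eval_add, eval_mul, eval_mul]
    exact dvd_add ((Int.gcd_dvd_right _ _).mul_left _) ((Int.gcd_dvd_left _ _).mul_right _)

theorem norm_sub_lt_norm_sub_of_norm_lt {a b : ℝ} (hab : a ^ 2 < b ^ 2) {θ : ℂ}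
    (hθ : ‖θ‖ < |a + b| / 2) : ‖(a : ℂ) - θ‖ < ‖(b : ℂ) - θ‖ := by
  -- `‖b - θ‖² - ‖a - θ‖² = (b - a) * (b + a) - 2 * (b - a) * re θ`
  have hre : |2 * (b - a) * θ.re| < (b - a) * (b + a) := by
    rw [abs_mul, abs_mul, abs_two]
    have hba : 0 < (b - a) * (b + a) := by nlinarith
    calc 2 * |b - a| * |θ.re| ≤ 2 * |b - a| * ‖θ‖ := by
          gcongr; exact Complex.abs_re_le_norm θ
      _ < 2 * |b - a| * (|a + b| / 2) := by
          have : b - a ≠ 0 := by rintro h; simp [h] at hba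
          gcongr
      _ = |(b - a) * (b + a)| := by rw [abs_mul, add_comm a b]; ring
      _ = (b - a) * (b + a) := abs_of_pos hba
  apply lt_of_pow_lt_pow_left₀ 2 (norm_nonneg _)
  rw [Complex.sq_norm, Complex.sq_norm, Complex.normSq_apply, Complex.normSq_apply]
  simp only [Complex.sub_re, Complex.sub_im, Complex.ofReal_re, Complex.ofReal_im]
  nlinarith [le_abs_self (2 * (b - a) * θ.re)]

theorem norm_eval_lt_norm_eval_of_forall_root {p : ℂ[X]} (hp : 0 < p.natDegree) {z w : ℂ}
    (hz : p.eval z ≠ 0) (h : ∀ θ ∈ p.roots, ‖z - θ‖ < ‖w - θ‖) :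
    ‖p.eval z‖ < ‖p.eval w‖ := by
  have hsplit := IsAlgClosed.splits p
  have hroots : p.roots ≠ 0 := by
    intro h0
    have := hsplit.natDegree_eq_card_roots
    simp [h0] at this; omega
  have hlc : 0 < ‖p.leadingCoeff‖ :=
    norm_pos_iff.mpr (leadingCoeff_ne_zero.mpr (ne_zero_of_natDegree_gt hp))
  have norm_prod (s : Multiset ℂ) : ‖s.prod‖ = (s.map (‖·‖)).prod := by
    simpa using map_multiset_prod normHom s
  rw [hsplit.eval_eq_prod_roots, hsplit.eval_eq_prod_roots, norm_mul, norm_mul,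
    norm_prod, norm_prod, Multiset.map_map, Multiset.map_map]
  refine mul_lt_mul_of_pos_left (Multiset.prod_map_lt_prod_map hroots _ _ (fun θ hθ => ?_) h) hlc
  exact norm_pos_iff.mpr (sub_ne_zero.mpr fun hzθ => hz ((mem_roots'.mp (hzθ ▸ hθ)).2))

theorem abs_eval_lt_abs_eval_of_dvd {f P : ℤ[X]} (hPf : P ∣ f) (hP : 0 < P.natDegree) {a b : ℤ}
    (ha : P.eval a ≠ 0) (h : ∀ θ : ℂ, aeval θ f = 0 → ‖(a : ℂ) - θ‖ < ‖(b : ℂ) - θ‖) :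
    |P.eval a| < |P.eval b| := by
  have hroot {θ : ℂ} (hθ : θ ∈ (P.map (Int.castRingHom ℂ)).roots) : aeval θ f = 0 := by
    obtain ⟨H, rfl⟩ := hPf
    rw [map_mul, aeval_def, ← eval_map]
    exact mul_eq_zero_of_left (mem_roots'.mp hθ).2 _
  have key := norm_eval_lt_norm_eval_of_forall_root (p := P.map (Int.castRingHom ℂ))
    (by rwa [natDegree_map_eq_of_injective (RingHom.injective_int _)]) (z := a) (w := b)
    (by rw [eval_intCast_map]; simpa using ha) fun θ hθ => h θ (hroot hθ)
  rw [eval_intCast_map, eval_intCast_map] at key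
  simp only [eq_intCast, Complex.norm_intCast] at key
  exact_mod_cast key

theorem exists_isPrimitive_eq_C_mul_map (g : ℚ[X]) :
    ∃ (q : ℚ) (P : ℤ[X]), P.IsPrimitive ∧ g = C q * P.map (Int.castRingHom ℚ) := by
  obtain ⟨b, hbM, hb⟩ := IsLocalization.integerNormalization_spec (nonZeroDivisors ℤ) g
  set N := IsLocalization.integerNormalization (nonZeroDivisors ℤ) g
  have hb0 : (b : ℚ) ≠ 0 := by exact_mod_cast nonZeroDivisors.ne_zero hbM
  refine ⟨N.content / b, N.primPart, N.isPrimitive_primPart, mul_left_cancel₀ (C_ne_zero.mpr hb0) ?_⟩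
  rw [N.eq_C_content_mul_primPart, Polynomial.map_mul, map_C, ← Int.cast_smul_eq_zsmul ℚ,
    smul_eq_C_mul] at hb
  rw [← mul_assoc, ← C_mul, mul_div_cancel₀ _ hb0]
  exact hb.symm

theorem exists_eq_C_mul_prod_of_map_eq_prod {ι : Type*} [Fintype ι] {f : ℤ[X]} {g : ι → ℚ[X]}
    (hf : f.map (Int.castRingHom ℚ) = ∏ i, g i) :
    ∃ (c : ℤ) (P : ι → ℤ[X]), f = C c * ∏ i, P i ∧ ∀ i, (g i).natDegree ≤ (P i).natDegree := by
  choose q P hP hgP using fun i => exists_isPrimitive_eq_C_mul_map (g i)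
  set φ := Int.castRingHom ℚ
  have hQ : (∏ i, P i).IsPrimitive :=
    Finset.prod_induction _ _ (fun _ _ => IsPrimitive.mul) isPrimitive_one fun i _ => hP i
  have hfQ : f.map φ = C (∏ i, q i) * (∏ i, P i).map φ := by
    rw [hf, Polynomial.map_prod, map_prod, ← Finset.prod_mul_distrib]
    exact Finset.prod_congr rfl fun i _ => hgP i
  obtain ⟨H, hH⟩ := (IsPrimitive.Int.dvd_iff_map_cast_dvd_map_cast _ f hQ).mpr
    ⟨C (∏ i, q i), by rw [hfQ, mul_comm]⟩
  have hHmap : H.map φ = C (∏ i, q i) := by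
    refine mul_left_cancel₀ ((Polynomial.map_ne_zero_iff (RingHom.injective_int φ)).mpr hQ.ne_zero) ?_
    rw [← Polynomial.map_mul, ← hH, hfQ, mul_comm]
  have hH0 : H.natDegree = 0 := by
    rw [← natDegree_map_eq_of_injective (RingHom.injective_int φ) H, hHmap, natDegree_C]
  refine ⟨H.coeff 0, P, by rw [hH, mul_comm, ← eq_C_of_natDegree_eq_zero hH0], fun i => ?_⟩
  rw [hgP i]
  exact natDegree_C_mul_le _ _ |>.trans natDegree_map_le

theorem exists_le_prod_rpow_inv_card {ι : Type*} [Fintype ι] [Nonempty ι] {x : ι → ℝ}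
    (hx : ∀ i, 0 ≤ x i) : ∃ i, x i ≤ (∏ j, x j) ^ (Fintype.card ι : ℝ)⁻¹ := by
  obtain ⟨i, -, hi⟩ := Finset.exists_min_image Finset.univ x Finset.univ_nonempty
  refine ⟨i, (Real.le_rpow_inv_iff_of_pos (hx i) (Finset.prod_nonneg fun j _ => hx j)
    (by simp [Fintype.card_pos])).mpr ?_⟩
  rw [Real.rpow_natCast, ← Finset.card_univ, ← Finset.prod_const]
  exact Finset.prod_le_prod (fun _ _ => hx i) hi

theorem prod_abs_eval_div_abs_eval {ι : Type*} [Fintype ι] {f : ℤ[X]} {c : ℤ} {P : ι → ℤ[X]}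
    (hfP : f = C c * ∏ i, P i) {a : ℤ} (ha : f.eval a ≠ 0) (b : ℤ) :
    ∏ i, |(((P i).eval b : ℤ) : ℝ)| / |(((P i).eval a : ℤ) : ℝ)| =
      |((f.eval b : ℤ) : ℝ)| / |((f.eval a : ℤ) : ℝ)| := by
  have hc : (c : ℝ) ≠ 0 := by
    rintro h
    apply ha
    simp [hfP, show c = 0 by exact_mod_cast h]
  have heval (y : ℤ) : ((f.eval y : ℤ) : ℝ) = c * ∏ i, (((P i).eval y : ℤ) : ℝ) := by
    rw [hfP]; simp [eval_prod]
  rw [Finset.prod_div_distrib, heval, heval, abs_mul, abs_mul, Finset.abs_prod, Finset.abs_prod,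
    mul_div_mul_left _ _ (abs_ne_zero.mpr hc)]

theorem IsQk.abs_eval_div_le {f P : ℤ[X]} {a b : ℤ} {k : ℕ} {q : ℝ} (hq : IsQk f a b k q)
    (hPf : P ∣ f) (ha : P.eval a ≠ 0) (hb : P.eval b ≠ 0)
    (hle : |((P.eval b : ℤ) : ℝ)| / |((P.eval a : ℤ) : ℝ)| ≤
      (|((f.eval b : ℤ) : ℝ)| / |((f.eval a : ℤ) : ℝ)|) ^ ((k + 1 : ℝ))⁻¹) :
    |((P.eval b : ℤ) : ℝ)| / |((P.eval a : ℤ) : ℝ)| ≤ q :=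
  hq.2 ⟨|P.eval a|, |P.eval b|, (admDiv_eval_of_dvd_s7 hPf ha).abs, (admDiv_eval_of_dvd_s7 hPf hb).abs,
    by push_cast; rfl, hle⟩

theorem stmt7_general (f : Polynomial ℤ) (a b : ℤ) (k : ℕ)
    (ha : f.eval a ≠ 0) (hab2 : a ^ 2 < b ^ 2)
    (M : ℝ) (hM : ∀ θ : ℂ, aeval θ f = 0 → ‖θ‖ ≤ M)
    (hq : IsQk f a b k 1)
    (hMab : M < (|a + b| : ℝ) / 2) :
    FactorsAtMost f k := by
  intro g hg hf
  obtain ⟨c, P, hfP, hPdeg⟩ := exists_eq_C_mul_prod_of_map_eq_prod hf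
  have hPf (i) : P i ∣ f := hfP ▸ (Finset.dvd_prod_of_mem P (Finset.mem_univ i)).mul_left _
  have hPa (i) : (P i).eval a ≠ 0 := fun h0 => ha (zero_dvd_iff.mp (h0 ▸ eval_dvd (hPf i)))
  have hlt (i) : |(P i).eval a| < |(P i).eval b| :=
    abs_eval_lt_abs_eval_of_dvd (hPf i) ((hg i).trans_le (hPdeg i)) (hPa i) fun θ hθ => by
      simpa using norm_sub_lt_norm_sub_of_norm_lt (a := a) (b := b) (by exact_mod_cast hab2)
        ((hM θ hθ).trans_lt (by exact_mod_cast hMab))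
  obtain ⟨i, hi⟩ := exists_le_prod_rpow_inv_card
    (x := fun i => |(((P i).eval b : ℤ) : ℝ)| / |(((P i).eval a : ℤ) : ℝ)|) fun i => by positivity
  rw [prod_abs_eval_div_abs_eval hfP ha] at hi
  have hPb : (P i).eval b ≠ 0 := abs_pos.mp ((abs_nonneg _).trans_lt (hlt i))
  have hle_one := hq.abs_eval_div_le (hPf i) (hPa i) hPb (by simpa using hi)
  have hone_lt : 1 < |(((P i).eval b : ℤ) : ℝ)| / |(((P i).eval a : ℤ) : ℝ)| :=
    (one_lt_div (abs_pos.mpr (by exact_mod_cast hPa i))).mpr (by exact_mod_cast hlt i)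
  linarith

theorem stmt7 (f : Polynomial ℤ) (a b : ℤ) (k : ℕ) (hk : 1 ≤ k)
    (ha : f.eval a ≠ 0) (hab : |f.eval a| < |f.eval b|) (hab2 : a ^ 2 < b ^ 2)
    (M : ℝ) (hM : ∀ θ : ℂ, aeval θ f = 0 → ‖θ‖ ≤ M)
    (hq : IsQk f a b k 1)
    (hMab : M < (|a + b| : ℝ) / 2) :
    FactorsAtMost f k :=
  stmt7_general f a b k ha hab2 M hM hq hMab
end
end

section
/- Let f(X) = a₀ + a₁X + ⋯ + a_nXⁿ be a polynomial with real coefficients satisfying 0 < a₀ ≤ a₁ ≤ ⋯ ≤ a_n. Then every complex root of f has absolute value at most 1. -/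
open Polynomial Real

noncomputable section

/-!
The coefficients `g i` of `(1 - X) * f` are `a₀` and the increments `aᵢ - aᵢ₋₁` for `i ≤ n`,
hence nonnegative, and they sum to `aₙ` (evaluate at `1`); the only other one is `g (n + 1) = -aₙ`.
At a root `z` this gives `aₙ zⁿ⁺¹ = ∑_{i ≤ n} g i zⁱ`, so if `‖z‖ > 1` the triangle inequality
yields `aₙ ‖z‖ⁿ⁺¹ ≤ aₙ ‖z‖ⁿ`, which is impossible since `aₙ ≥ a₀ > 0`.
-/

namespace Polynomial

section Algebra

variable {R A : Type*} [CommRing R] [Ring A] [Algebra R A]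

theorem coeff_one_sub_X_mul_zero (f : R[X]) : ((1 - X) * f).coeff 0 = f.coeff 0 := by
  simp [sub_mul]

theorem coeff_one_sub_X_mul_succ (f : R[X]) (i : ℕ) :
    ((1 - X) * f).coeff (i + 1) = f.coeff (i + 1) - f.coeff i := by
  simp [sub_mul, coeff_X_mul]

theorem sum_coeff_one_sub_X_mul_smul_pow {f : R[X]} {n : ℕ} (hn : f.natDegree ≤ n) (x : A) :
    ∑ i ∈ Finset.range (n + 1), ((1 - X) * f).coeff i • x ^ i
      = f.coeff n • x ^ (n + 1) + (1 - x) * aeval x f := by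
  have hdeg : ((1 - X) * f).natDegree < n + 2 := by
    have := natDegree_mul_le (p := 1 - X) (q := f)
    have : (1 - X : R[X]).natDegree ≤ 1 := by
      rw [← natDegree_neg, neg_sub]; exact natDegree_X_sub_C_le 1
    omega
  have h := aeval_eq_sum_range' hdeg x
  rw [Finset.sum_range_succ, coeff_one_sub_X_mul_succ, coeff_eq_zero_of_natDegree_lt (by omega),
    map_mul, map_sub, map_one, aeval_X] at h
  rw [h, zero_sub, neg_smul]
  abel

end Algebra

theorem norm_sum_smul_pow_le {A : Type*} [NormedRing A] [NormOneClass A] [NormedAlgebra ℝ A]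
    {w : ℕ → ℝ} {n : ℕ} (hw : ∀ i ≤ n, 0 ≤ w i) {z : A} (hz : 1 ≤ ‖z‖) :
    ‖∑ i ∈ Finset.range (n + 1), w i • z ^ i‖ ≤ (∑ i ∈ Finset.range (n + 1), w i) * ‖z‖ ^ n := by
  rw [Finset.sum_mul]
  refine (norm_sum_le _ _).trans (Finset.sum_le_sum fun i hi => ?_)
  have hi : i ≤ n := Nat.lt_succ_iff.mp (Finset.mem_range.mp hi)
  rw [norm_smul, Real.norm_of_nonneg (hw i hi)]
  exact mul_le_mul_of_nonneg_left ((norm_pow_le z i).trans (pow_le_pow_right₀ hz hi)) (hw i hi)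

theorem norm_le_one_of_aeval_eq_zero_of_coeff_mono {A : Type*} [NormedDivisionRing A]
    [NormedAlgebra ℝ A] {f : ℝ[X]} (h0 : 0 < f.coeff 0)
    (hmono : ∀ i < f.natDegree, f.coeff i ≤ f.coeff (i + 1)) {z : A} (hz : aeval z f = 0) :
    ‖z‖ ≤ 1 := by
  set n := f.natDegree
  set g := (1 - X) * f
  have hg : ∀ i ≤ n, 0 ≤ g.coeff i := by
    rintro (_ | i) hi
    · rw [coeff_one_sub_X_mul_zero]; exact h0.le
    · rw [coeff_one_sub_X_mul_succ]; exact sub_nonneg.2 (hmono i hi)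
  have hsum : ∑ i ∈ Finset.range (n + 1), g.coeff i = f.coeff n := by
    simpa only [smul_eq_mul, one_pow, mul_one, sub_self, zero_mul, add_zero] using
      sum_coeff_one_sub_X_mul_smul_pow (f := f) le_rfl (1 : ℝ)
  have hlead : 0 < f.coeff n := by
    rw [← hsum]
    refine h0.trans_le ?_
    rw [← coeff_one_sub_X_mul_zero]
    exact Finset.single_le_sum (fun i hi => hg i (Nat.lt_succ_iff.mp (Finset.mem_range.mp hi)))
      (Finset.mem_range.mpr n.succ_pos)
  by_contra! hr
  have key : f.coeff n * ‖z‖ ^ (n + 1) ≤ f.coeff n * ‖z‖ ^ n := by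
    calc f.coeff n * ‖z‖ ^ (n + 1) = ‖f.coeff n • z ^ (n + 1)‖ := by
          rw [norm_smul, norm_pow, Real.norm_of_nonneg hlead.le]
      _ = ‖∑ i ∈ Finset.range (n + 1), g.coeff i • z ^ i‖ := by
          rw [sum_coeff_one_sub_X_mul_smul_pow le_rfl, hz, mul_zero, add_zero]
      _ ≤ f.coeff n * ‖z‖ ^ n := hsum ▸ norm_sum_smul_pow_le hg hr.le
  exact (pow_lt_pow_right₀ hr n.lt_succ_self).not_ge (le_of_mul_le_mul_left key hlead)

end Polynomial

theorem stmt11 (f : Polynomial ℝ) (h0 : 0 < f.coeff 0)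
    (hmono : ∀ i < f.natDegree, f.coeff i ≤ f.coeff (i + 1)) :
    ∀ z : ℂ, aeval z f = 0 → ‖z‖ ≤ 1 :=
  fun _ => norm_le_one_of_aeval_eq_zero_of_coeff_mono h0 hmono
end
end

section
/- Let f be a Littlewood polynomial and a, b nonnegative integers with a + b ≥ 4 such that f(a) = p^{k₁}·r and f(b) = p^{k₂} with p prime, k₂ > k₁ ≥ 0 and 0 < r < p. Then f is a product of at most 1 + ⌊(k₂ − k₁ − 1)·log p / log(p/r)⌋ irreducible factors over ℚ. -/
open Polynomial Real

noncomputable section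

private lemma geom_bound (t : ℝ) (ht : 2 ≤ t) :
    ∀ n : ℕ, ∑ i ∈ Finset.range n, t ^ i ≤ t ^ n - 1 := by
  intro n
  induction n with
  | zero => simp
  | succ n ih =>
    rw [Finset.sum_range_succ, pow_succ]
    nlinarith [pow_nonneg (by linarith : (0:ℝ) ≤ t) n]

private lemma littlewood_root_lt_two (f : Polynomial ℤ)
    (hcoeff : ∀ i ≤ f.natDegree, f.coeff i = 1 ∨ f.coeff i = -1)
    (z : ℂ) (hz : (f.map (Int.castRingHom ℂ)).eval z = 0) : ‖z‖ < 2 := by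
  by_contra hcon
  push_neg at hcon
  set n := f.natDegree with hn
  have habs : ∀ i ≤ n, ‖(Int.castRingHom ℂ) (f.coeff i)‖ = 1 := by
    intro i hi
    rcases hcoeff i hi with h | h <;> rw [h] <;> simp
  rw [Polynomial.eval_map, Polynomial.eval₂_eq_sum_range, Finset.sum_range_succ] at hz
  have hkey : (Int.castRingHom ℂ) (f.coeff n) * z ^ n
      = -(∑ i ∈ Finset.range n, (Int.castRingHom ℂ) (f.coeff i) * z ^ i) := by
    linear_combination hz
  have h1 : ‖z‖ ^ n
      ≤ ∑ i ∈ Finset.range n, ‖z‖ ^ i := by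
    calc ‖z‖ ^ n
        = ‖(Int.castRingHom ℂ) (f.coeff n) * z ^ n‖ := by
          rw [norm_mul, norm_pow, habs n le_rfl, one_mul]
      _ = ‖∑ i ∈ Finset.range n, (Int.castRingHom ℂ) (f.coeff i) * z ^ i‖ := by
          rw [hkey, norm_neg]
      _ ≤ ∑ i ∈ Finset.range n, ‖(Int.castRingHom ℂ) (f.coeff i) * z ^ i‖ :=
          norm_sum_le _ _
      _ = ∑ i ∈ Finset.range n, ‖z‖ ^ i := by
          apply Finset.sum_congr rfl
          intro i hi
          rw [norm_mul, norm_pow, habs i (le_of_lt (Finset.mem_range.mp hi)), one_mul]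
  have h2 := geom_bound ‖z‖ hcon n
  linarith

private lemma mprod_pos (F : ℂ → ℝ) :
    ∀ s : Multiset ℂ, (∀ z ∈ s, 0 < F z) → 0 < (s.map F).prod := by
  intro s
  induction s using Multiset.induction with
  | empty => intro; simp
  | cons a t ih =>
    intro h
    rw [Multiset.map_cons, Multiset.prod_cons]
    exact mul_pos (h a (Multiset.mem_cons_self a t))
      (ih fun z hz => h z (Multiset.mem_cons_of_mem hz))

private lemma mprod_lt (F G : ℂ → ℝ) :
    ∀ s : Multiset ℂ, s ≠ 0 → (∀ z ∈ s, 0 < F z ∧ F z < G z) →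
      (s.map F).prod < (s.map G).prod := by
  intro s
  induction s using Multiset.induction with
  | empty => intro h; exact absurd rfl h
  | cons a t ih =>
    intro _ h
    rw [Multiset.map_cons, Multiset.map_cons, Multiset.prod_cons, Multiset.prod_cons]
    have ha := h a (Multiset.mem_cons_self a t)
    rcases eq_or_ne t 0 with rfl | ht
    · simpa using ha.2
    · have hFt : 0 < (t.map F).prod :=
        mprod_pos F t fun z hz => (h z (Multiset.mem_cons_of_mem hz)).1
      have h2 := ih ht fun z hz => h z (Multiset.mem_cons_of_mem hz)
      nlinarith [ha.1, ha.2]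

private lemma grow (H : Polynomial ℤ) (hd : 0 < H.natDegree)
    (hroots : ∀ z : ℂ, (H.map (Int.castRingHom ℂ)).eval z = 0 → ‖z‖ < 2)
    (x y : ℕ) (hxy : x < y) (hsum : 4 ≤ x + y)
    (hx : H.eval (x : ℤ) ≠ 0) (hy : H.eval (y : ℤ) ≠ 0) :
    (H.eval (x : ℤ)).natAbs < (H.eval (y : ℤ)).natAbs := by
  set P := H.map (Int.castRingHom ℂ) with hP
  have hPd : P.natDegree = H.natDegree :=
    natDegree_map_eq_of_injective Int.cast_injective H
  have hP0 : P ≠ 0 := fun h => by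
    rw [h] at hPd; simp at hPd; omega
  have hsplit : P.Splits := IsAlgClosed.splits P
  have hprod := hsplit.eq_prod_roots
  have hcard : P.roots ≠ 0 := by
    intro h
    have h2 := hsplit.natDegree_eq_card_roots
    rw [h] at h2
    simp at h2
    omega
  -- evaluation formula
  have heval : ∀ w : ℂ, ‖P.eval w‖
      = ‖P.leadingCoeff‖ * (P.roots.map fun z => ‖w - z‖).prod := by
    intro w
    have hnm : ∀ s : Multiset ℂ, ‖s.prod‖ = (s.map (‖·‖)).prod :=
      fun s => map_multiset_prod (normHom.toMonoidHom : ℂ →* ℝ) s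
    conv_lhs => rw [hprod]
    rw [eval_mul, eval_C, norm_mul, eval_multiset_prod, hnm, Multiset.map_map, Multiset.map_map]
    congr 1
    congr 1
    apply Multiset.map_congr rfl
    intro z hz
    simp
  have hlc : 0 < ‖P.leadingCoeff‖ :=
    norm_pos_iff.mpr (leadingCoeff_ne_zero.mpr hP0)
  have hevalx : P.eval ((x : ℕ) : ℂ) = ((H.eval (x : ℤ) : ℤ) : ℂ) := by
    have h := eval_intCast_map (Int.castRingHom ℂ) H (x : ℤ)
    push_cast at h ⊢
    exact h
  have hevaly : P.eval ((y : ℕ) : ℂ) = ((H.eval (y : ℤ) : ℤ) : ℂ) := by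
    have h := eval_intCast_map (Int.castRingHom ℂ) H (y : ℤ)
    push_cast at h ⊢
    exact h
  have hxc : P.eval ((x : ℕ) : ℂ) ≠ 0 := by
    rw [hevalx]; exact_mod_cast hx
  have hmain : ‖P.eval ((x : ℕ) : ℂ)‖ < ‖P.eval ((y : ℕ) : ℂ)‖ := by
    rw [heval, heval]
    apply mul_lt_mul_of_pos_left _ hlc
    apply mprod_lt _ _ _ hcard
    intro z hz
    have hzr : P.eval z = 0 := (mem_roots'.mp hz).2
    have hre : z.re < 2 := lt_of_le_of_lt (Complex.re_le_norm z) (hroots z hzr)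
    have hxz : (x : ℂ) ≠ z := by
      intro h0
      exact hxc (h0 ▸ hzr)
    constructor
    · exact norm_pos_iff.mpr (sub_ne_zero.mpr hxz)
    · have hsq : ‖(x : ℂ) - z‖ ^ 2 < ‖(y : ℂ) - z‖ ^ 2 := by
        rw [Complex.sq_norm, Complex.sq_norm]
        simp only [Complex.normSq_apply, Complex.sub_re, Complex.sub_im,
          Complex.natCast_re, Complex.natCast_im]
        have hx' : (x : ℝ) < (y : ℝ) := by exact_mod_cast hxy
        have hs' : (4 : ℝ) ≤ (x : ℝ) + (y : ℝ) := by exact_mod_cast hsum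
        nlinarith [mul_pos (sub_pos.mpr hx') (by linarith : (0:ℝ) < (x:ℝ) + (y:ℝ) - 2 * z.re)]
      exact lt_of_pow_lt_pow_left₀ 2 (norm_nonneg _) hsq
  rw [hevalx, hevaly] at hmain
  rw [Complex.norm_intCast, Complex.norm_intCast] at hmain
  rw [← Int.cast_abs, ← Int.cast_abs] at hmain
  have h9 : |H.eval (x : ℤ)| < |H.eval (y : ℤ)| := by exact_mod_cast hmain
  rw [Int.abs_eq_natAbs, Int.abs_eq_natAbs] at h9
  exact_mod_cast h9

private lemma gauss_decomp {M : ℕ} (f : Polynomial ℤ) (hf : f.IsPrimitive)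
    (g : Fin M → Polynomial ℚ) (hg : ∀ i, g i ≠ 0)
    (hfg : f.map (Int.castRingHom ℚ) = ∏ i, g i) :
    ∃ (H : Fin M → Polynomial ℤ) (ε : ℤ), (ε = 1 ∨ ε = -1) ∧
      (∀ i, (H i).natDegree = (g i).natDegree) ∧ (∏ i, H i) = C ε * f := by
  classical
  set φ := Int.castRingHom ℚ with hφ
  have hinj : Function.Injective φ := Int.cast_injective
  -- integer normalizations
  set N := fun i => IsLocalization.integerNormalization (nonZeroDivisors ℤ) (g i) with hN
  set H := fun i => (N i).primPart with hH
  have hmap : ∀ i, ∃ q : ℚ, q ≠ 0 ∧ (H i).map φ = C q * g i := by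
    intro i
    obtain ⟨b, hb⟩ := IsLocalization.integerNormalization_map_to_map
      (nonZeroDivisors ℤ) (g i)
    have hb0 : (b : ℤ) ≠ 0 := nonZeroDivisors.coe_ne_zero b
    have hN0 : N i ≠ 0 := by
      intro h0
      apply hg i
      have : (N i).map (algebraMap ℤ ℚ) = (b : ℤ) • g i := hb
      rw [h0, Polynomial.map_zero] at this
      have := this.symm
      rw [zsmul_eq_mul] at this
      -- (b:ℚ[X]) * g i = 0
      rcases mul_eq_zero.mp this with h | h
      · exact absurd h (by exact_mod_cast hb0)
      · exact h
    have hc0 : (N i).content ≠ 0 := fun h => hN0 (content_eq_zero_iff.mp h)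
    refine ⟨(b : ℤ) / ((N i).content : ℚ), ?_, ?_⟩
    · apply div_ne_zero
      · exact_mod_cast hb0
      · exact_mod_cast hc0
    · have h2 : (N i) = C (N i).content * H i := (N i).eq_C_content_mul_primPart
      have hb' : (N i).map φ = C ((b : ℤ) : ℚ) * g i := by
        rw [show φ = algebraMap ℤ ℚ from rfl, hb, zsmul_eq_mul, C_eq_intCast]
      have h1 : C (((N i).content : ℤ) : ℚ) * (H i).map φ = C ((b : ℤ) : ℚ) * g i := by
        rw [← hb']
        conv_rhs => rw [h2]
        rw [Polynomial.map_mul, map_C]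
        rfl
      have hCne : (C (((N i).content : ℤ) : ℚ)) ≠ 0 := by
        simpa using (fun h => hc0 (by exact_mod_cast h))
      apply mul_left_cancel₀ hCne
      rw [h1, ← mul_assoc, ← C_mul]
      congr 2
      field_simp
  choose q hq0 hqmap using hmap
  have hHdeg : ∀ i, (H i).natDegree = (g i).natDegree := by
    intro i
    have h1 : ((H i).map φ).natDegree = (H i).natDegree :=
      natDegree_map_eq_of_injective hinj _
    rw [hqmap i] at h1
    rw [← h1]
    rw [natDegree_C_mul (hq0 i)]
  -- product relation over ℚ
  have hprodmap : (∏ i, H i).map φ = C (∏ i, q i) * f.map φ := by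
    rw [Polynomial.map_prod, hfg]
    rw [show (C (∏ i, q i) : Polynomial ℚ) = ∏ i, C (q i) from map_prod C q Finset.univ,
      ← Finset.prod_mul_distrib]
    exact Finset.prod_congr rfl fun i _ => hqmap i
  -- the product is primitive
  have hPprim : (∏ i, H i).IsPrimitive := by
    apply Finset.prod_induction H IsPrimitive (fun _ _ ha hb => ha.mul hb) isPrimitive_one
    intro i _
    exact isPrimitive_primPart (N i)
  set Q : ℚ := ∏ i, q i with hQ
  have hQ0 : Q ≠ 0 := Finset.prod_ne_zero_iff.mpr fun i _ => hq0 i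
  -- clear denominators
  have hden : (C ((Q.den : ℤ) : ℚ)) * (∏ i, H i).map φ = C ((Q.num : ℚ)) * f.map φ := by
    rw [hprodmap, ← mul_assoc, ← C_mul]
    congr 2
    push_cast
    rw [mul_comm]
    exact_mod_cast Rat.mul_den_eq_num Q
  have hint : C (Q.den : ℤ) * (∏ i, H i) = C Q.num * f := by
    apply Polynomial.map_injective φ hinj
    rw [Polynomial.map_mul, Polynomial.map_mul, map_C, map_C]
    convert hden using 3 <;> push_cast <;> rfl
  -- compare contents
  have hcont : normalize ((Q.den : ℤ)) = normalize Q.num := by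
    have h1 := congrArg Polynomial.content hint
    rw [content_C_mul, content_C_mul, hPprim.content_eq_one, hf.content_eq_one,
      mul_one, mul_one] at h1
    exact h1
  have hden0 : (0 : ℤ) < (Q.den : ℤ) := by exact_mod_cast Q.pos
  have habs : Q.num = (Q.den : ℤ) ∨ Q.num = -(Q.den : ℤ) := by
    have h2 : ((Q.den : ℤ)).natAbs = Q.num.natAbs := by
      obtain ⟨hd1, hd2⟩ := normalize_eq_normalize_iff.mp hcont
      exact Nat.dvd_antisymm (Int.natAbs_dvd_natAbs.mpr hd1) (Int.natAbs_dvd_natAbs.mpr hd2)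
    omega
  rcases habs with h | h
  · refine ⟨H, 1, Or.inl rfl, hHdeg, ?_⟩
    rw [map_one, one_mul]
    have : C (Q.den : ℤ) * (∏ i, H i) = C (Q.den : ℤ) * f := by rw [hint, h]
    exact mul_left_cancel₀ (by simp) this
  · refine ⟨H, -1, Or.inr rfl, hHdeg, ?_⟩
    have : C (Q.den : ℤ) * (∏ i, H i) = C (Q.den : ℤ) * (C (-1) * f) := by
      rw [hint, h]
      simp only [map_neg, map_one]
      ring
    exact mul_left_cancel₀ (by simp) this

theorem stmt14 (f : Polynomial ℤ) (hn : 0 < f.natDegree)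
    (hcoeff : ∀ i ≤ f.natDegree, f.coeff i = 1 ∨ f.coeff i = -1)
    (a b : ℕ) (hab : 4 ≤ a + b)
    (p : ℕ) (hp : p.Prime) (k₁ k₂ r : ℕ) (hk : k₁ < k₂) (hr0 : 0 < r) (hrp : r < p)
    (hfa : f.eval (a : ℤ) = (p : ℤ) ^ k₁ * (r : ℤ))
    (hfb : f.eval (b : ℤ) = (p : ℤ) ^ k₂) :
    FactorsAtMost f
      (1 + (⌊((k₂ : ℝ) - (k₁ : ℝ) - 1) * Real.logb ((p : ℝ) / (r : ℝ)) (p : ℝ)⌋).toNat) := by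
  set t := (⌊((k₂ : ℝ) - (k₁ : ℝ) - 1) * Real.logb ((p : ℝ) / (r : ℝ)) (p : ℝ)⌋).toNat with htdef
  intro g hg hfg
  -- f is primitive
  have hfprim : f.IsPrimitive := by
    intro s hs
    have h1 : s ∣ f.coeff f.natDegree := by
      obtain ⟨u, hu⟩ := hs
      exact ⟨u.coeff f.natDegree, by rw [hu, coeff_C_mul]⟩
    rcases hcoeff f.natDegree le_rfl with h | h <;> rw [h] at h1
    · exact isUnit_of_dvd_one h1
    · exact isUnit_of_dvd_unit h1 (Int.isUnit_iff.mpr (Or.inr rfl))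
  have hgne : ∀ i, g i ≠ 0 := by
    intro i h0
    have := hg i
    rw [h0, natDegree_zero] at this
    exact lt_irrefl 0 this
  obtain ⟨H, ε, hε, hHdeg, hHprod⟩ := gauss_decomp f hfprim g hgne hfg
  have hεabs : ε.natAbs = 1 := by rcases hε with rfl | rfl <;> rfl
  -- evaluation identities
  have hevala : ∏ i, (H i).eval (a : ℤ) = ε * f.eval (a : ℤ) := by
    rw [← Polynomial.eval_prod, hHprod, eval_mul, eval_C]
  have hevalb : ∏ i, (H i).eval (b : ℤ) = ε * f.eval (b : ℤ) := by
    rw [← Polynomial.eval_prod, hHprod, eval_mul, eval_C]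
  set ua : Fin (1 + t + 1) → ℕ := fun i => ((H i).eval (a : ℤ)).natAbs with hua
  set vb : Fin (1 + t + 1) → ℕ := fun i => ((H i).eval (b : ℤ)).natAbs with hvb
  have hA : ∏ i, ua i = p ^ k₁ * r := by
    have h1 : (∏ i, (H i).eval (a : ℤ)).natAbs = ∏ i, ua i :=
      map_prod Int.natAbsHom (fun i => (H i).eval (a : ℤ)) Finset.univ
    rw [hevala, hfa] at h1
    rw [← h1, Int.natAbs_mul, hεabs, one_mul, Int.natAbs_mul, Int.natAbs_pow]
    simp
  have hB : ∏ i, vb i = p ^ k₂ := by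
    have h1 : (∏ i, (H i).eval (b : ℤ)).natAbs = ∏ i, vb i :=
      map_prod Int.natAbsHom (fun i => (H i).eval (b : ℤ)) Finset.univ
    rw [hevalb, hfb] at h1
    rw [← h1, Int.natAbs_mul, hεabs, one_mul, Int.natAbs_pow]
    simp
  have hAne : ∀ i, ua i ≠ 0 := by
    intro i
    refine Finset.prod_ne_zero_iff.mp ?_ i (Finset.mem_univ i)
    rw [hA]
    exact Nat.mul_ne_zero (pow_ne_zero k₁ hp.pos.ne') hr0.ne'
  have hBne : ∀ i, vb i ≠ 0 := by
    intro i
    refine Finset.prod_ne_zero_iff.mp ?_ i (Finset.mem_univ i)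
    rw [hB]
    exact pow_ne_zero k₂ hp.pos.ne'
  -- roots of f and of the factors
  have hroot := littlewood_root_lt_two f hcoeff
  have hmapprod : ∏ j, (H j).map (Int.castRingHom ℂ)
      = C ((ε : ℤ) : ℂ) * f.map (Int.castRingHom ℂ) := by
    rw [← Polynomial.map_prod, hHprod, Polynomial.map_mul, map_C]
    rfl
  have hHroots : ∀ i, ∀ z : ℂ, ((H i).map (Int.castRingHom ℂ)).eval z = 0 →
      ‖z‖ < 2 := by
    intro i z hz
    apply hroot z
    have h1 : ∏ j, ((H j).map (Int.castRingHom ℂ)).eval z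
        = ((ε : ℤ) : ℂ) * (f.map (Int.castRingHom ℂ)).eval z := by
      rw [← Polynomial.eval_prod, hmapprod, eval_mul, eval_C]
    have h2 : ∏ j, ((H j).map (Int.castRingHom ℂ)).eval z = 0 :=
      Finset.prod_eq_zero (Finset.mem_univ i) hz
    rw [h2] at h1
    have hεc : ((ε : ℤ) : ℂ) ≠ 0 := by
      rcases hε with rfl | rfl <;> norm_num
    rcases mul_eq_zero.mp h1.symm with h1 | h1
    · exact absurd h1 hεc
    · exact h1
  -- basic numeric facts
  have hab2 : p ^ k₁ * r < p ^ k₂ := by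
    calc p ^ k₁ * r < p ^ k₁ * p := (Nat.mul_lt_mul_left (Nat.pow_pos (n := k₁) hp.pos)).mpr hrp
      _ = p ^ (k₁ + 1) := (pow_succ p k₁).symm
      _ ≤ p ^ k₂ := Nat.pow_le_pow_right hp.pos hk
  have hfa_abs : (f.eval (a : ℤ)).natAbs = p ^ k₁ * r := by
    rw [hfa, Int.natAbs_mul, Int.natAbs_pow]
    simp
  have hfb_abs : (f.eval (b : ℤ)).natAbs = p ^ k₂ := by
    rw [hfb, Int.natAbs_pow]
    simp
  have hfa_ne : f.eval (a : ℤ) ≠ 0 := by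
    rw [hfa]
    exact_mod_cast Nat.mul_ne_zero (pow_ne_zero k₁ hp.pos.ne') hr0.ne'
  have hfb_ne : f.eval (b : ℤ) ≠ 0 := by
    rw [hfb]
    exact_mod_cast pow_ne_zero k₂ hp.pos.ne'
  -- a < b
  have hba : a < b := by
    rcases lt_trichotomy a b with h | h | h
    · exact h
    · exfalso
      subst h
      rw [hfa] at hfb
      have : p ^ k₁ * r = p ^ k₂ := by exact_mod_cast hfb
      omega
    · exfalso
      have := grow f hn hroot b a h (by omega) hfb_ne hfa_ne
      rw [hfa_abs, hfb_abs] at this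
      omega
  -- per-factor growth
  have hgrow : ∀ i, ua i < vb i := by
    intro i
    apply grow (H i) (by rw [hHdeg i]; exact hg i) (hHroots i) a b hba hab
    · exact Int.natAbs_ne_zero.mp (hAne i)
    · exact Int.natAbs_ne_zero.mp (hBne i)
  -- p-adic valuation counting
  have hstep : ∀ i, (ua i).factorization p + 1 ≤ (vb i).factorization p := by
    intro i
    have hdvd : vb i ∣ p ^ k₂ := hB ▸ Finset.dvd_prod_of_mem vb (Finset.mem_univ i)
    obtain ⟨j, hj, hji⟩ := (Nat.dvd_prime_pow hp).mp hdvd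
    have h1 : p ^ ((ua i).factorization p) ∣ ua i := Nat.ordProj_dvd _ _
    have h2 : p ^ ((ua i).factorization p) ≤ ua i :=
      Nat.le_of_dvd (Nat.pos_of_ne_zero (hAne i)) h1
    have h3 : ua i < p ^ j := hji ▸ hgrow i
    have h4 : (ua i).factorization p < j :=
      (Nat.pow_lt_pow_iff_right hp.one_lt).mp (lt_of_le_of_lt h2 h3)
    have h5 : (vb i).factorization p = j := by
      rw [hji, hp.factorization_pow]
      simp
    omega
  have hpr : ¬ p ∣ r := fun hd => absurd (Nat.le_of_dvd hr0 hd) (not_le.mpr hrp)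
  have hsumA : ∑ i, (ua i).factorization p = k₁ := by
    have h1 := Nat.factorization_prod (S := Finset.univ) (g := ua) fun i _ => hAne i
    have h2 := congrArg (fun F => F p) h1
    simp only [Finsupp.finset_sum_apply] at h2
    rw [hA, Nat.factorization_mul (pow_ne_zero k₁ hp.pos.ne') hr0.ne'] at h2
    simp only [Finsupp.add_apply, hp.factorization_pow, Finsupp.single_eq_same,
      Nat.factorization_eq_zero_of_not_dvd hpr, add_zero] at h2
    exact h2.symm
  have hsumB : ∑ i, (vb i).factorization p = k₂ := by
    have h1 := Nat.factorization_prod (S := Finset.univ) (g := vb) fun i _ => hBne i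
    have h2 := congrArg (fun F => F p) h1
    simp only [Finsupp.finset_sum_apply] at h2
    rw [hB] at h2
    simp only [hp.factorization_pow, Finsupp.single_eq_same] at h2
    exact h2.symm
  have hsum_le : ∑ i, ((ua i).factorization p + 1) ≤ ∑ i, (vb i).factorization p :=
    Finset.sum_le_sum fun i _ => hstep i
  rw [Finset.sum_add_distrib, hsumA, hsumB] at hsum_le
  simp only [Finset.sum_const, Finset.card_univ, Fintype.card_fin, smul_eq_mul, mul_one] at hsum_le
  -- hsum_le : k₁ + (1 + t + 1) ≤ k₂
  -- the floor bound
  have hplt : (1 : ℝ) < (p : ℝ) / (r : ℝ) := by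
    rw [one_lt_div (by exact_mod_cast hr0)]
    exact_mod_cast hrp
  have hlogpr : 0 < Real.log ((p : ℝ) / (r : ℝ)) := Real.log_pos hplt
  have hlogb : 1 ≤ Real.logb ((p : ℝ) / (r : ℝ)) (p : ℝ) := by
    rw [Real.logb, le_div_iff₀ hlogpr, one_mul]
    apply Real.log_le_log (by positivity)
    apply div_le_self (by positivity)
    exact_mod_cast hr0
  have hnn : (0 : ℝ) ≤ (k₂ : ℝ) - (k₁ : ℝ) - 1 := by
    have : (k₁ : ℝ) + 1 ≤ (k₂ : ℝ) := by exact_mod_cast hk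
    linarith
  have hX : ((k₂ : ℝ) - (k₁ : ℝ) - 1)
      ≤ ((k₂ : ℝ) - (k₁ : ℝ) - 1) * Real.logb ((p : ℝ) / (r : ℝ)) (p : ℝ) :=
    le_mul_of_one_le_right hnn hlogb
  have hfloor : (k₂ : ℤ) - (k₁ : ℤ) - 1
      ≤ ⌊((k₂ : ℝ) - (k₁ : ℝ) - 1) * Real.logb ((p : ℝ) / (r : ℝ)) (p : ℝ)⌋ := by
    apply Int.le_floor.mpr
    push_cast
    exact hX
  omega
end
end

section
/- Let f ∈ ℤ[X] with 0 < |f(a)| < |f(b)| for integers a, b, and assume gcd(f(a), f'(a)) = gcd(f(b), f'(b)) = 1. Let M be the maximum absolute value of the roots of f, let k ≥ 1 and let q^u_k = max{ d₂/d₁ ≤ (|f(b)|/|f(a)|)^(1/(k+1)) : d₁ a unitary divisor of f(a), d₂ a unitary divisor of f(b) }. If |b| > q^u_k·|a| + (1 + q^u_k)·M, then f is a product of at most k irreducible factors over ℚ. -/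
open Polynomial Real

noncomputable section

/-! Over `ℚ`, a factorisation of `f` into `k + 1` nonconstant factors lifts by Gauss's lemma to
`f = ± p₀ ⋯ pₖ` over `ℤ`. As `f(a)` is coprime to `f'(a)`, each `pᵢ(a)` is coprime to its
cofactor, so `|pᵢ(a)|` is a unitary divisor of `f(a)`, and likewise at `b`. The ratios
`|pᵢ(b)| / |pᵢ(a)|` multiply to `|f(b)| / |f(a)|`, so one of them is at most its `(k+1)`-th root,
hence at most `q`. But over the complex roots `θ` of `pᵢ`, all of modulus at most `M`, each
factor satisfies `|b - θ| ≥ |b| - M > q (|a| + M) ≥ q |a - θ|`, so `|pᵢ(b)| > q |pᵢ(a)|`. -/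

namespace Polynomial

section Derivative

variable {R : Type*} [CommRing R] {f p e : R[X]} {a : R}

theorem isPrimitive_of_isCoprime_eval_derivative
    (h : IsCoprime (f.eval a) (f.derivative.eval a)) : f.IsPrimitive := by
  rintro r ⟨g, rfl⟩
  refine h.isUnit_of_dvd' ?_ ?_ <;> simp

theorem isCoprime_eval_of_eq_mul (h : f = p * e)
    (hf : IsCoprime (f.eval a) (f.derivative.eval a)) :
    IsCoprime (p.eval a) (e.eval a) := by
  obtain ⟨u, v, huv⟩ := hf
  simp only [h, derivative_mul, eval_mul, eval_add] at huv
  exact ⟨u * e.eval a + v * e.derivative.eval a, v * p.derivative.eval a, by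
    linear_combination huv⟩

end Derivative

section Gauss

variable {R K : Type*} [CommRing R] [IsDomain R] [NormalizedGCDMonoid R] [Field K]
  [Algebra R K] [IsFractionRing R K]

theorem exists_isPrimitive_map_associated {g : K[X]} (hg : g ≠ 0) :
    ∃ p : R[X], p.IsPrimitive ∧ Associated (p.map (algebraMap R K)) g := by
  set q := IsLocalization.integerNormalization (nonZeroDivisors R) g
  obtain ⟨b, hb, hqg⟩ := IsLocalization.integerNormalization_spec (nonZeroDivisors R) g
  have hinj := IsFractionRing.injective R K
  have hq : q ≠ 0 := mt IsFractionRing.integerNormalization_eq_zero_iff.mp hg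
  have hcontent : algebraMap R K q.content ≠ 0 :=
    (map_ne_zero_iff _ hinj).mpr (mt content_eq_zero_iff.mp hq)
  have hb0 : algebraMap R K b ≠ 0 := (map_ne_zero_iff _ hinj).mpr (nonZeroDivisors.ne_zero hb)
  have hprim : Associated (q.map (algebraMap R K)) (q.primPart.map (algebraMap R K)) := by
    conv_lhs => rw [q.eq_C_content_mul_primPart, Polynomial.map_mul, map_C]
    exact associated_unit_mul_left _ _ (isUnit_C.mpr hcontent.isUnit)
  have hmap : Associated (q.map (algebraMap R K)) g := by
    rw [hqg, ← algebraMap_smul K, smul_eq_C_mul]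
    exact associated_unit_mul_left _ _ (isUnit_C.mpr hb0.isUnit)
  exact ⟨q.primPart, isPrimitive_primPart q, hprim.symm.trans hmap⟩

theorem exists_associated_prod_of_map_eq_prod {ι : Type*} [Fintype ι] {f : R[X]}
    (hf : f.IsPrimitive) {g : ι → K[X]} (hg : ∀ i, g i ≠ 0)
    (h : f.map (algebraMap R K) = ∏ i, g i) :
    ∃ p : ι → R[X], (∀ i, (p i).natDegree = (g i).natDegree) ∧ Associated f (∏ i, p i) := by
  choose p hprim hassoc using fun i => exists_isPrimitive_map_associated (R := R) (hg i)
  have hprod : (∏ i, p i).IsPrimitive :=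
    Finset.prod_induction _ _ (fun _ _ => IsPrimitive.mul) isPrimitive_one fun i _ => hprim i
  have hmap : Associated ((∏ i, p i).map (algebraMap R K)) (f.map (algebraMap R K)) := by
    rw [Polynomial.map_prod, h]
    exact Associated.prod _ _ _ fun i _ => hassoc i
  refine ⟨p, fun i => ?_, associated_of_dvd_dvd
    (hf.dvd_of_fraction_map_dvd_fraction_map hmap.symm.dvd)
    (hprod.dvd_of_fraction_map_dvd_fraction_map hmap.dvd)⟩
  rw [← natDegree_map_eq_of_injective (IsFractionRing.injective R K)]
  exact natDegree_eq_of_degree_eq (degree_eq_degree_of_associated (hassoc i))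

end Gauss

theorem pow_mul_norm_eval_lt_norm_eval {P : ℂ[X]} (hP : 0 < P.natDegree) {M c : ℝ}
    (hc : 0 < c) (hM : ∀ θ ∈ P.roots, ‖θ‖ ≤ M) {z w : ℂ} (hz : P.eval z ≠ 0)
    (hzw : c * (‖z‖ + M) < ‖w‖ - M) :
    c ^ P.natDegree * ‖P.eval z‖ < ‖P.eval w‖ := by
  have hsplit := IsAlgClosed.splits P
  have hroots : P.roots ≠ 0 := by
    rw [← Multiset.card_pos, ← hsplit.natDegree_eq_card_roots]
    exact hP
  have hlc : 0 < ‖P.leadingCoeff‖ := by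
    simpa using ne_zero_of_natDegree_gt hP
  have hpos : ∀ θ ∈ P.roots, 0 < c * ‖z - θ‖ := fun θ hθ =>
    mul_pos hc (norm_pos_iff.mpr (sub_ne_zero.mpr fun hzθ =>
      hz (hzθ ▸ (mem_roots'.mp hθ).2)))
  have hlt : ∀ θ ∈ P.roots, c * ‖z - θ‖ < ‖w - θ‖ := fun θ hθ =>
    calc c * ‖z - θ‖ ≤ c * (‖z‖ + M) := by
          gcongr
          exact (norm_sub_le z θ).trans (by gcongr; exact hM θ hθ)
      _ < ‖w‖ - M := hzw
      _ ≤ ‖w - θ‖ := by linarith [norm_sub_norm_le w θ, hM θ hθ]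
  have hnorm (s : Multiset ℂ) : ‖s.prod‖ = (s.map (‖·‖)).prod :=
    map_multiset_prod (normHom : ℂ →*₀ ℝ) s
  rw [hsplit.eval_eq_prod_roots, hsplit.eval_eq_prod_roots, norm_mul, norm_mul, hnorm, hnorm,
    Multiset.map_map, Multiset.map_map, hsplit.natDegree_eq_card_roots, mul_left_comm]
  refine mul_lt_mul_of_pos_left ?_ hlc
  calc c ^ P.roots.card * (P.roots.map ((‖·‖) ∘ (z - ·))).prod
      = (P.roots.map fun θ => c * ‖z - θ‖).prod := by
        rw [Multiset.prod_map_mul, Multiset.map_const', Multiset.prod_replicate]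
        rfl
    _ < (P.roots.map ((‖·‖) ∘ (w - ·))).prod :=
        Multiset.prod_map_lt_prod_map hroots _ _ hpos hlt

theorem mul_abs_eval_lt_abs_eval {p : ℤ[X]} (hp : 0 < p.natDegree) {M c : ℝ} (hc : 1 ≤ c)
    (hM : ∀ θ : ℂ, aeval θ p = 0 → ‖θ‖ ≤ M) {a b : ℤ} (ha : p.eval a ≠ 0)
    (hab : c * ((|a| : ℝ) + M) < (|b| : ℝ) - M) :
    c * |((p.eval a : ℤ) : ℝ)| < |((p.eval b : ℤ) : ℝ)| := by
  set P := p.map (Int.castRingHom ℂ)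
  have hP : P.natDegree = p.natDegree := natDegree_map_eq_of_injective Int.cast_injective p
  have heval (t : ℤ) : ‖P.eval (t : ℂ)‖ = |((p.eval t : ℤ) : ℝ)| := by
    rw [eval_intCast_map, eq_intCast, Complex.norm_intCast, Int.cast_id]
  have hlt := pow_mul_norm_eval_lt_norm_eval (P := P) (hP ▸ hp) (zero_lt_one.trans_le hc)
    (fun θ hθ => hM θ (by rw [aeval_def, eval₂_eq_eval_map]; exact (mem_roots'.mp hθ).2))
    (z := a) (w := b) (by rw [eval_intCast_map, eq_intCast]; exact_mod_cast ha)
    (by rwa [Complex.norm_intCast, Complex.norm_intCast])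
  rw [heval, heval] at hlt
  refine lt_of_le_of_lt ?_ hlt
  gcongr
  exact le_self_pow₀ hc (hP ▸ hp.ne')

end Polynomial

theorem unitDiv_of_eq_mul {N d e : ℤ} (h : N = d * e) (hd : d ≠ 0) (hde : IsCoprime d e) :
    UnitDiv N d :=
  ⟨⟨e, h⟩, by rw [h, Int.mul_ediv_cancel_left _ hd]; exact Int.isCoprime_iff_gcd_eq_one.mp hde⟩

theorem unitDiv_abs_of_eq_mul {N d e : ℤ} (h : N = d * e) (hd : d ≠ 0) (hde : IsCoprime d e) :
    UnitDiv N |d| := by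
  rcases abs_choice d with hd' | hd' <;> rw [hd']
  · exact unitDiv_of_eq_mul h hd hde
  · exact unitDiv_of_eq_mul (by rw [h]; ring) (neg_ne_zero.mpr hd) hde.neg_neg

theorem unitDiv_abs_eval_of_eq_mul {f p e : ℤ[X]} (h : f = p * e) {a : ℤ}
    (hf : IsCoprime (f.eval a) (f.derivative.eval a)) (ha : f.eval a ≠ 0) :
    UnitDiv (f.eval a) |p.eval a| := by
  have hfa : f.eval a = p.eval a * e.eval a := by rw [h, eval_mul]
  exact unitDiv_abs_of_eq_mul hfa (left_ne_zero_of_mul (hfa ▸ ha))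
    (isCoprime_eval_of_eq_mul h hf)

theorem abs_eval_eq_prod_abs_eval {ι : Type*} [Fintype ι] {f : ℤ[X]} {p : ι → ℤ[X]}
    (h : Associated f (∏ i, p i)) (t : ℤ) :
    |((f.eval t : ℤ) : ℝ)| = ∏ i, |(((p i).eval t : ℤ) : ℝ)| := by
  have ht := h.map (evalRingHom t)
  rw [coe_evalRingHom, eval_prod] at ht
  have habs : |f.eval t| = |∏ i, (p i).eval t| := by
    rcases Int.associated_iff.mp ht with ht | ht <;> rw [ht]
    exact abs_neg _
  simp only [← Int.cast_abs, habs, Finset.abs_prod, Int.cast_prod]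

theorem exists_le_rpow_inv_card_of_prod_eq {ι : Type*} [Fintype ι] [Nonempty ι] {x : ι → ℝ}
    {T : ℝ} (hT : 0 < T) (hx : ∏ i, x i = T) :
    ∃ i, x i ≤ T ^ ((Fintype.card ι : ℝ)⁻¹) := by
  by_contra! h
  have hlt := Finset.prod_lt_prod_of_nonempty (fun _ _ => Real.rpow_pos_of_pos hT _)
    (fun i _ => h i) Finset.univ_nonempty
  rw [Finset.prod_const, Finset.card_univ, ← Real.rpow_natCast, ← Real.rpow_mul hT.le,
    inv_mul_cancel₀ (by positivity), Real.rpow_one, hx] at hlt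
  exact hlt.false

theorem stmt15_general (f : Polynomial ℤ) (a b : ℤ) (k : ℕ)
    (ha : f.eval a ≠ 0) (hab : |f.eval a| < |f.eval b|)
    (hga : Int.gcd (f.eval a) (f.derivative.eval a) = 1)
    (hgb : Int.gcd (f.eval b) (f.derivative.eval b) = 1)
    (M : ℝ) (hM : ∀ θ : ℂ, aeval θ f = 0 → ‖θ‖ ≤ M)
    (q : ℝ) (hq : IsQuk f a b k q)
    (hb : (|b| : ℝ) > q * (|a| : ℝ) + (1 + q) * M) :
    FactorsAtMost f k := by
  intro g hg heq
  have hcopa := Int.isCoprime_iff_gcd_eq_one.mpr hga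
  have hcopb := Int.isCoprime_iff_gcd_eq_one.mpr hgb
  have hfb : f.eval b ≠ 0 := abs_pos.mp ((abs_nonneg _).trans_lt hab)
  obtain ⟨p, hdeg, hfp⟩ := exists_associated_prod_of_map_eq_prod
    (isPrimitive_of_isCoprime_eval_derivative hcopa) (fun i => ne_zero_of_natDegree_gt (hg i))
    (by rwa [algebraMap_int_eq])
  set T := |((f.eval b : ℤ) : ℝ)| / |((f.eval a : ℤ) : ℝ)|
  have hT : 1 < T := (one_lt_div (by positivity)).mpr (by exact_mod_cast hab)
  obtain ⟨i, hi⟩ := exists_le_rpow_inv_card_of_prod_eq (zero_lt_one.trans hT)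
    (x := fun i => |(((p i).eval b : ℤ) : ℝ)| / |(((p i).eval a : ℤ) : ℝ)|)
    (by rw [Finset.prod_div_distrib, ← abs_eval_eq_prod_abs_eval hfp,
      ← abs_eval_eq_prod_abs_eval hfp])
  obtain ⟨e, he⟩ : p i ∣ f := (Finset.dvd_prod_of_mem p (Finset.mem_univ i)).trans hfp.symm.dvd
  have hpa : (p i).eval a ≠ 0 := left_ne_zero_of_mul (by rwa [he, eval_mul] at ha)
  have hq1 : 1 ≤ q := hq.2 ⟨1, 1, ⟨one_dvd _, Int.gcd_one_left _⟩,
    ⟨one_dvd _, Int.gcd_one_left _⟩, by norm_num, Real.one_le_rpow hT.le (by positivity)⟩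
  have hiq : |(((p i).eval b : ℤ) : ℝ)| / |(((p i).eval a : ℤ) : ℝ)| ≤ q :=
    hq.2 ⟨_, _, unitDiv_abs_eval_of_eq_mul he hcopa ha, unitDiv_abs_eval_of_eq_mul he hcopb hfb,
      by push_cast; rfl, by simpa using hi⟩
  have hlt := mul_abs_eval_lt_abs_eval (hdeg i ▸ hg i) hq1
    (fun θ hθ => hM θ (by rw [he, map_mul, hθ, zero_mul])) hpa (by linarith)
  rw [div_le_iff₀ (by positivity)] at hiq
  linarith

theorem stmt15 (f : Polynomial ℤ) (a b : ℤ) (k : ℕ) (hk : 1 ≤ k)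
    (ha : f.eval a ≠ 0) (hab : |f.eval a| < |f.eval b|)
    (hga : Int.gcd (f.eval a) (f.derivative.eval a) = 1)
    (hgb : Int.gcd (f.eval b) (f.derivative.eval b) = 1)
    (M : ℝ) (hM : ∀ θ : ℂ, aeval θ f = 0 → ‖θ‖ ≤ M)
    (q : ℝ) (hq : IsQuk f a b k q)
    (hb : (|b| : ℝ) > q * (|a| : ℝ) + (1 + q) * M) :
    FactorsAtMost f k :=
  stmt15_general f a b k ha hab hga hgb M hM q hq hb
end
end

section
/- Let f(X) = a₀ + a₁X + ⋯ + a_nXⁿ ∈ ℤ[X] and a, b integers with a² < b² and |a_n| > Σ_{i=0}^{n−1}|a_i|(|a+b|/2)^{i−n}. Suppose |f(a)| = p^{k₁} and |f(b)| = p^{k₂}·r^j with p, r distinct primes, k₁ < k₂, r^j < p^{k₁}, r^j < p^{k₂−k₁}, and suppose p ∤ f'(a)·f'(b) and r ∤ f'(b). Then f is a product of at most 1 + ⌊((k₂−k₁)/j)·log_r p⌋ irreducible factors over ℚ. -/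
/-! Every complex root of `f` lies in the open disc of radius `|a + b|/2`, and since
`a² < b²` each point of that disc is strictly nearer to `a` than to `b`. Hence every nonconstant
integer factor `H` of `f` satisfies `1 ≤ |H(a)| < |H(b)|`, so `H(b)` is divisible by `p` or `r`.
If `f` had three nonconstant factors, two of them would share one of these primes at `b`, and the
product rule would make that prime divide `f'(b)`. So `f` has at most two irreducible factors,
and `r ^ j < p ^ (k₂ - k₁)` makes the stated bound at least two. -/

open Polynomial Real

noncomputable section

theorem Polynomial.norm_lt_of_isRoot {K : Type*} [NormedField K] {P : K[X]} {c : ℝ}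
    (hc : 0 < c)
    (hlead : ∑ i ∈ Finset.range P.natDegree, ‖P.coeff i‖ * c ^ ((i : ℤ) - P.natDegree) <
      ‖P.leadingCoeff‖)
    {z : K} (hz : P.IsRoot z) : ‖z‖ < c := by
  set n := P.natDegree
  by_contra! hzc
  have ht : 1 ≤ ‖z‖ / c := (one_le_div hc).mpr hzc
  have hpow : ∀ i ∈ Finset.range n, ‖P.coeff i‖ * ‖z‖ ^ i ≤
      ‖P.coeff i‖ * c ^ ((i : ℤ) - n) * ‖z‖ ^ n := by
    intro i hi
    have hin : i ≤ n := (Finset.mem_range.mp hi).le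
    calc ‖P.coeff i‖ * ‖z‖ ^ i = ‖P.coeff i‖ * (c ^ i * (‖z‖ / c) ^ i) := by
          rw [div_pow]; field_simp
      _ ≤ ‖P.coeff i‖ * (c ^ i * (‖z‖ / c) ^ n) := by gcongr
      _ = ‖P.coeff i‖ * c ^ ((i : ℤ) - n) * ‖z‖ ^ n := by
          rw [zpow_sub₀ hc.ne', zpow_natCast, zpow_natCast, div_pow]; field_simp
  have hsum : P.coeff n * z ^ n = -∑ i ∈ Finset.range n, P.coeff i * z ^ i := by
    have := hz.eq_zero
    rw [eval_eq_sum_range, Finset.sum_range_succ] at this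
    linear_combination this
  have hle : ‖P.leadingCoeff‖ * ‖z‖ ^ n ≤
      (∑ i ∈ Finset.range n, ‖P.coeff i‖ * c ^ ((i : ℤ) - n)) * ‖z‖ ^ n :=
    calc ‖P.leadingCoeff‖ * ‖z‖ ^ n = ‖∑ i ∈ Finset.range n, P.coeff i * z ^ i‖ := by
          rw [← norm_neg (∑ i ∈ Finset.range n, _), ← hsum, norm_mul, norm_pow]; rfl
      _ ≤ ∑ i ∈ Finset.range n, ‖P.coeff i‖ * ‖z‖ ^ i := by
          refine (norm_sum_le _ _).trans_eq (Finset.sum_congr rfl fun i _ => ?_)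
          rw [norm_mul, norm_pow]
      _ ≤ _ := by rw [Finset.sum_mul]; exact Finset.sum_le_sum hpow
  have hz0 : 0 < ‖z‖ ^ n := pow_pos (hc.trans_le hzc) n
  exact (mul_lt_mul_of_pos_right hlead hz0).not_ge hle

theorem Complex.norm_sub_lt_norm_sub_of_sq_lt_sq {a b : ℝ} (hab : a ^ 2 < b ^ 2) {z : ℂ}
    (hz : ‖z‖ < |a + b| / 2) : ‖(a : ℂ) - z‖ < ‖(b : ℂ) - z‖ := by
  have hre : |z.re| < |a + b| / 2 := (Complex.abs_re_le_norm z).trans_lt hz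
  -- `‖b - z‖² - ‖a - z‖² = (b - a) (a + b - 2 Re z)`, and both factors have the sign of `a + b`.
  have key : 0 < (b - a) * (a + b - 2 * z.re) := by
    rcases abs_cases (a + b) with ⟨h, h0⟩ | ⟨h, h0⟩ <;> rw [h] at hre <;>
      rcases abs_lt.mp hre with ⟨h1, h2⟩ <;> nlinarith
  rw [← sq_lt_sq₀ (norm_nonneg _) (norm_nonneg _), Complex.sq_norm, Complex.sq_norm,
    Complex.normSq_apply, Complex.normSq_apply]
  simp only [Complex.sub_re, Complex.ofReal_re, Complex.sub_im, Complex.ofReal_im]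
  nlinarith

theorem Polynomial.norm_eval_lt_norm_eval {P : ℂ[X]} (hP : 0 < P.natDegree) {x y : ℂ}
    (h : ∀ z ∈ P.roots, ‖x - z‖ < ‖y - z‖) : ‖P.eval x‖ < ‖P.eval y‖ := by
  have hsplit : P.Splits := IsAlgClosed.splits P
  have hP0 : P ≠ 0 := ne_zero_of_natDegree_gt hP
  have hy : P.eval y ≠ 0 := fun hy =>
    ((h y ((mem_roots hP0).mpr hy)).trans_le (by simp)).false
  by_cases hx : P.eval x = 0
  · simpa [hx] using hy
  have hroots : P.roots ≠ 0 := by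
    rw [← Multiset.card_pos, ← hsplit.natDegree_eq_card_roots]; exact hP
  have hnorm : ∀ w, ‖(P.roots.map (w - ·)).prod‖ = (P.roots.map fun z => ‖w - z‖).prod :=
    fun w => (map_multiset_prod (normHom : ℂ →*₀ ℝ) _).trans (by simp [Multiset.map_map])
  rw [hsplit.eval_eq_prod_roots, hsplit.eval_eq_prod_roots, norm_mul, norm_mul, hnorm, hnorm]
  refine mul_lt_mul_of_pos_left (Multiset.prod_map_lt_prod_map hroots _ _ (fun z hz => ?_) h)
    (norm_pos_iff.mpr (leadingCoeff_ne_zero.mpr hP0))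
  exact norm_pos_iff.mpr (sub_ne_zero.mpr fun hxz => hx (hxz ▸ (mem_roots hP0).mp hz))

theorem Polynomial.abs_eval_lt_abs_eval_of_dvd {f H : ℤ[X]} {a b : ℤ} (hab : a ^ 2 < b ^ 2)
    (hlead : (|f.leadingCoeff| : ℝ) >
      ∑ i ∈ Finset.range f.natDegree,
        (|f.coeff i| : ℝ) * ((|a + b| : ℝ) / 2) ^ ((i : ℤ) - (f.natDegree : ℤ)))
    (hHf : H ∣ f) (hH : 0 < H.natDegree) : |H.eval a| < |H.eval b| := by
  have hab' : (a : ℝ) ^ 2 < (b : ℝ) ^ 2 := by exact_mod_cast hab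
  have hc : 0 < |(a : ℝ) + b| / 2 := by
    refine half_pos (abs_pos.mpr fun h => ?_)
    rw [eq_neg_of_add_eq_zero_left h, neg_sq] at hab'
    exact hab'.false
  have hinj : Function.Injective (Int.castRingHom ℂ) := RingHom.injective_int _
  have hroot : ∀ z ∈ (H.map (Int.castRingHom ℂ)).roots, ‖z‖ < |(a : ℝ) + b| / 2 := by
    intro z hz
    refine norm_lt_of_isRoot (P := f.map (Int.castRingHom ℂ)) hc ?_ ?_
    · simpa [natDegree_map_eq_of_injective hinj, leadingCoeff_map_of_injective hinj,
        Complex.norm_intCast] using hlead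
    · obtain ⟨T, rfl⟩ := hHf
      simp [(isRoot_of_mem_roots hz).eq_zero]
  have key := norm_eval_lt_norm_eval (P := H.map (Int.castRingHom ℂ))
    (x := (a : ℝ)) (y := (b : ℝ)) (by rwa [natDegree_map_eq_of_injective hinj])
    fun z hz => Complex.norm_sub_lt_norm_sub_of_sq_lt_sq hab' (hroot z hz)
  exact_mod_cast (by simpa [eval_intCast_map, Complex.norm_intCast] using key :
    |((H.eval a : ℤ) : ℝ)| < |((H.eval b : ℤ) : ℝ)|)

theorem Polynomial.dvd_eval_derivative_of_mul_dvd {R : Type*} [CommRing R] {f G K : R[X]}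
    {x s : R} (hGK : G * K ∣ f) (hG : s ∣ G.eval x) (hK : s ∣ K.eval x) :
    s ∣ f.derivative.eval x := by
  obtain ⟨T, rfl⟩ := hGK
  simp only [derivative_mul, eval_add, eval_mul]
  exact dvd_add (dvd_mul_of_dvd_left (dvd_add (hK.mul_left _) (hG.mul_right _)) _)
    ((hG.mul_right _).mul_right _)

theorem Polynomial.exists_isPrimitive_natDegree_eq_map_dvd {R K : Type*} [CommRing R]
    [IsDomain R] [NormalizedGCDMonoid R] [Field K] [Algebra R K] [IsFractionRing R K]
    (g : K[X]) :
    ∃ H : R[X], H.IsPrimitive ∧ H.natDegree = g.natDegree ∧ H.map (algebraMap R K) ∣ g := by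
  set N := IsLocalization.integerNormalization (nonZeroDivisors R) g
  obtain ⟨c, hc, hN⟩ := IsLocalization.integerNormalization_spec (nonZeroDivisors R) g
  have hc0 : algebraMap R K c ≠ 0 :=
    IsFractionRing.to_map_ne_zero_of_mem_nonZeroDivisors hc
  have hNg : N.map (algebraMap R K) = C (algebraMap R K c) * g := by
    rw [← smul_eq_C_mul, algebraMap_smul]; exact hN
  refine ⟨N.primPart, N.isPrimitive_primPart, ?_, ?_⟩
  · rw [natDegree_primPart, ← natDegree_map_eq_of_injective (IsFractionRing.injective R K), hNg,
      natDegree_C_mul hc0]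
  · refine (Polynomial.map_dvd _ N.primPart_dvd).trans ?_
    rw [hNg]
    exact (associated_unit_mul_left _ _ (isUnit_C.mpr (isUnit_iff_ne_zero.mpr hc0))).dvd

theorem factorsAtMost_of_not_mul_mul_dvd {f : ℤ[X]} {k : ℕ} (hk : 2 ≤ k)
    (h : ∀ H₁ H₂ H₃ : ℤ[X], 0 < H₁.natDegree → 0 < H₂.natDegree → 0 < H₃.natDegree →
      ¬ H₁ * H₂ * H₃ ∣ f) :
    FactorsAtMost f k := by
  obtain ⟨m, rfl⟩ : ∃ m, k = m + 2 := ⟨k - 2, by omega⟩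
  intro g hg hprod
  have hlift (i : Fin (m + 3)) : ∃ H : ℤ[X], H.IsPrimitive ∧ 0 < H.natDegree ∧
      H.map (Int.castRingHom ℚ) ∣ g i := by
    obtain ⟨H, hprim, hdeg, hdvd⟩ := exists_isPrimitive_natDegree_eq_map_dvd (R := ℤ) (g i)
    exact ⟨H, hprim, hdeg ▸ hg i, by simpa using hdvd⟩
  obtain ⟨H₁, hp₁, hd₁, hv₁⟩ := hlift 0
  obtain ⟨H₂, hp₂, hd₂, hv₂⟩ := hlift 1
  obtain ⟨H₃, hp₃, hd₃, hv₃⟩ := hlift 2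
  have hg₃ : g 0 * g 1 * g 2 ∣ f.map (Int.castRingHom ℚ) := by
    rw [hprod, Fin.prod_univ_succ, Fin.prod_univ_succ, Fin.prod_univ_succ, ← mul_assoc,
      ← mul_assoc]
    exact dvd_mul_right _ _
  refine h H₁ H₂ H₃ hd₁ hd₂ hd₃ ?_
  rw [IsPrimitive.Int.dvd_iff_map_cast_dvd_map_cast _ _ ((hp₁.mul hp₂).mul hp₃),
    Polynomial.map_mul, Polynomial.map_mul]
  exact (mul_dvd_mul (mul_dvd_mul hv₁ hv₂) hv₃).trans hg₃

theorem Int.natCast_dvd_or_natCast_dvd_of_dvd {x n : ℤ} {p r k j : ℕ} (hp : p.Prime)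
    (hr : r.Prime) (hx : x.natAbs ≠ 1) (hxn : x ∣ n) (hn : n.natAbs = p ^ k * r ^ j) :
    (p : ℤ) ∣ x ∨ (r : ℤ) ∣ x := by
  obtain ⟨s, hs, hsx⟩ := Nat.exists_prime_and_dvd hx
  have hsn : s ∣ p ^ k * r ^ j := hn ▸ hsx.trans (Int.natAbs_dvd_natAbs.mpr hxn)
  have hsx' : (s : ℤ) ∣ x := Int.natCast_dvd.mpr hsx
  rcases hs.dvd_mul.mp hsn with hsp | hsr
  · left; rwa [(Nat.prime_dvd_prime_iff_eq hs hp).mp (hs.dvd_of_dvd_pow hsp)] at hsx'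
  · right; rwa [(Nat.prime_dvd_prime_iff_eq hs hr).mp (hs.dvd_of_dvd_pow hsr)] at hsx'

theorem Real.one_le_div_mul_logb {r p : ℝ} {m j : ℕ} (hr : 1 < r) (hj : 0 < j)
    (h : r ^ j < p ^ m) : 1 ≤ (m / j : ℝ) * logb r p := by
  have hlog := Real.log_lt_log (by positivity) h
  rw [Real.log_pow, Real.log_pow] at hlog
  rw [logb, div_mul_div_comm, one_le_div (by have := Real.log_pos hr; positivity)]
  exact hlog.le

theorem stmt16_general (f : Polynomial ℤ) (a b : ℤ) (hab2 : a ^ 2 < b ^ 2)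
    (hlead : (|f.leadingCoeff| : ℝ) >
      ∑ i ∈ Finset.range f.natDegree,
        (|f.coeff i| : ℝ) * ((|a + b| : ℝ) / 2) ^ ((i : ℤ) - (f.natDegree : ℤ)))
    (p r : ℕ) (hp : p.Prime) (hr : r.Prime)
    (k₁ k₂ j : ℕ) (hj : 0 < j) (hk : k₁ < k₂)
    (h2 : r ^ j < p ^ (k₂ - k₁))
    (hfa : (f.eval a).natAbs = p ^ k₁) (hfb : (f.eval b).natAbs = p ^ k₂ * r ^ j)
    (hpd : ¬ (p : ℤ) ∣ f.derivative.eval a * f.derivative.eval b)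
    (hrd : ¬ (r : ℤ) ∣ f.derivative.eval b) :
    FactorsAtMost f
      (1 + (⌊(((k₂ : ℝ) - (k₁ : ℝ)) / (j : ℝ)) * Real.logb (r : ℝ) (p : ℝ)⌋).toNat) := by
  have hlog : 1 ≤ (((k₂ : ℝ) - (k₁ : ℝ)) / (j : ℝ)) * Real.logb (r : ℝ) (p : ℝ) := by
    rw [← Nat.cast_sub hk.le]
    exact one_le_div_mul_logb (by exact_mod_cast hr.one_lt) hj (by exact_mod_cast h2)
  have hfloor : 1 ≤ ⌊(((k₂ : ℝ) - (k₁ : ℝ)) / (j : ℝ)) * Real.logb (r : ℝ) (p : ℝ)⌋ :=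
    Int.le_floor.mpr (by rwa [Int.cast_one])
  refine factorsAtMost_of_not_mul_mul_dvd (by omega) fun H₁ H₂ H₃ hd₁ hd₂ hd₃ hdvd => ?_
  have hfa0 : f.eval a ≠ 0 := fun h => by
    simp only [h, Int.natAbs_zero] at hfa
    exact (pow_pos hp.pos k₁).ne' hfa.symm
  have hprime (H : ℤ[X]) (hHf : H ∣ f) (hH : 0 < H.natDegree) :
      (p : ℤ) ∣ H.eval b ∨ (r : ℤ) ∣ H.eval b := by
    have ha : H.eval a ≠ 0 := fun h => hfa0 (zero_dvd_iff.mp (h ▸ eval_dvd hHf))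
    have hb := (Int.one_le_abs ha).trans_lt (abs_eval_lt_abs_eval_of_dvd hab2 hlead hHf hH)
    rw [Int.abs_eq_natAbs] at hb
    exact Int.natCast_dvd_or_natCast_dvd_of_dvd hp hr (by omega) (eval_dvd hHf) hfb
  have hpd' : ¬ (p : ℤ) ∣ f.derivative.eval b := fun h => hpd (h.mul_left _)
  have h₁₂ : H₁ * H₂ ∣ f := (dvd_mul_right _ _).trans hdvd
  have h₁₃ : H₁ * H₃ ∣ f := (mul_dvd_mul_right (dvd_mul_right _ _) _).trans hdvd
  have h₂₃ : H₂ * H₃ ∣ f := (mul_dvd_mul_right (dvd_mul_left _ _) _).trans hdvd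
  rcases hprime H₁ ((dvd_mul_right _ _).trans h₁₂) hd₁ with t₁ | t₁ <;>
  rcases hprime H₂ ((dvd_mul_left _ _).trans h₁₂) hd₂ with t₂ | t₂ <;>
  rcases hprime H₃ ((dvd_mul_left _ _).trans h₂₃) hd₃ with t₃ | t₃ <;>
  first
  | exact hpd' (dvd_eval_derivative_of_mul_dvd h₁₂ t₁ t₂)
  | exact hpd' (dvd_eval_derivative_of_mul_dvd h₁₃ t₁ t₃)
  | exact hpd' (dvd_eval_derivative_of_mul_dvd h₂₃ t₂ t₃)
  | exact hrd (dvd_eval_derivative_of_mul_dvd h₁₂ t₁ t₂)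
  | exact hrd (dvd_eval_derivative_of_mul_dvd h₁₃ t₁ t₃)
  | exact hrd (dvd_eval_derivative_of_mul_dvd h₂₃ t₂ t₃)

theorem stmt16 (f : Polynomial ℤ) (a b : ℤ) (hab2 : a ^ 2 < b ^ 2)
    (hlead : (|f.leadingCoeff| : ℝ) >
      ∑ i ∈ Finset.range f.natDegree,
        (|f.coeff i| : ℝ) * ((|a + b| : ℝ) / 2) ^ ((i : ℤ) - (f.natDegree : ℤ)))
    (p r : ℕ) (hp : p.Prime) (hr : r.Prime) (hpr : p ≠ r)
    (k₁ k₂ j : ℕ) (hk₁ : 0 < k₁) (hj : 0 < j) (hk : k₁ < k₂)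
    (h1 : r ^ j < p ^ k₁) (h2 : r ^ j < p ^ (k₂ - k₁))
    (hfa : (f.eval a).natAbs = p ^ k₁) (hfb : (f.eval b).natAbs = p ^ k₂ * r ^ j)
    (hpd : ¬ (p : ℤ) ∣ f.derivative.eval a * f.derivative.eval b)
    (hrd : ¬ (r : ℤ) ∣ f.derivative.eval b) :
    FactorsAtMost f
      (1 + (⌊(((k₂ : ℝ) - (k₁ : ℝ)) / (j : ℝ)) * Real.logb (r : ℝ) (p : ℝ)⌋).toNat) :=
  stmt16_general f a b hab2 hlead p r hp hr k₁ k₂ j hj hk h2 hfa hfb hpd hrd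
end
end
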